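/- arXiv:2602.12208 — 6 statements merged into one kernel-verified Lean document; each statement's English description precedes it below -/
import Mathlib

section
/- Let 1 <= l <= min(r,s), put lambda = lambda_l(r,s) and l_0 = min{ i : lambda_i(r,s) = lambda }. Then there exists a unique element y of the subspace D_{r+s-l_0} of M(r,s) such that T^{lambda-1}(y) = x_{r+s+1-l_0-lambda}. -/
open scoped BigOperators

noncomputable section

/-- The basis vector `v_{a,b}` of `M(r,s)` (1-indexed), read as `0` when
`a` or `b` is out of range. -/
def vv (F : Type*) [Field F] (r s : ℕ) (a b : ℤ) : Matrix (Fin r) (Fin s) F :=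
  Matrix.of fun i j => if (i : ℤ) + 1 = a ∧ (j : ℤ) + 1 = b then 1 else 0

/-- The linear endomorphism `T` of `M(r,s)` with `T(v_{i,j}) = v_{i-1,j} + v_{i,j-1}`
(out-of-range symbols read as `0`); it models the action of `g - 1`. -/
def TT (F : Type*) [Field F] (r s : ℕ) :
    Matrix (Fin r) (Fin s) F →ₗ[F] Matrix (Fin r) (Fin s) F where
  toFun A := Matrix.of fun i j =>
    (if h : (i : ℕ) + 1 < r then A ⟨(i : ℕ) + 1, h⟩ j else 0) +
    (if h : (j : ℕ) + 1 < s then A i ⟨(j : ℕ) + 1, h⟩ else 0)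
  map_add' A B := by
    ext i j
    simp only [Matrix.of_apply, Matrix.add_apply]
    split_ifs <;> abel
  map_smul' c A := by
    ext i j
    simp only [Matrix.of_apply, Matrix.smul_apply, RingHom.id_apply, smul_eq_mul]
    split_ifs <;> ring

/-- `x_m = ∑_{j=1}^m (-1)^{j-1} v_{j, m+1-j}` (the empty sum if `m ≤ 0`). -/
def xx (F : Type*) [Field F] (r s : ℕ) (m : ℤ) : Matrix (Fin r) (Fin s) F :=
  ∑ j ∈ Finset.range m.toNat, ((-1 : F) ^ j) • vv F r s ((j : ℤ) + 1) (m - j)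

/-- The subspace `D_d` of `M(r,s)`, spanned by the `v_{i,j}` with `i + j = d + 1`. -/
def Dd (F : Type*) [Field F] (r s : ℕ) (d : ℕ) :
    Submodule F (Matrix (Fin r) (Fin s) F) :=
  Submodule.span F { A | ∃ a b : ℕ, 1 ≤ a ∧ a ≤ r ∧ 1 ≤ b ∧ b ≤ s ∧
    a + b = d + 1 ∧ A = vv F r s (a : ℤ) (b : ℤ) }

/-- Binomial coefficient `C(a,b)` as an element of `F`, with the convention that
it is `0` when `b < 0` or `b > a`. -/
def binF (F : Type*) [Field F] (a b : ℤ) : F :=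
  if 0 ≤ b ∧ b ≤ a then (Nat.choose a.toNat b.toNat : F) else 0

/-- `lam` (restricted to indices `1,…,min r s`) is the Jordan type of the nilpotent
operator `T` on `M(r,s)`: a nonincreasing list of `min r s` positive integers such that
for each `m ≥ 1` the number of parts `≥ m` is `rank T^{m-1} - rank T^m`. -/
def IsJordanType (F : Type*) [Field F] (r s : ℕ) (lam : ℕ → ℕ) : Prop :=
  (∀ l, 1 ≤ l → l ≤ min r s → 0 < lam l) ∧
  (∀ l l', 1 ≤ l → l ≤ l' → l' ≤ min r s → lam l' ≤ lam l) ∧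
  ∀ m, 1 ≤ m →
    ((Finset.Icc 1 (min r s)).filter fun l => m ≤ lam l).card =
      Module.finrank F ↥(LinearMap.range ((TT F r s) ^ (m - 1))) -
      Module.finrank F ↥(LinearMap.range ((TT F r s) ^ m))

/-!
`T` lowers the antidiagonal degree by one, `M(r,s) = ⨁ D_d`, and for `m ≤ min r s` the vector
`x_m` spans `ker T ∩ D_m`; the shift `v_{i,j} ↦ v_{i-1,j}` commutes with `T` and sends `x_{m+1}`
to `-x_m`. Hence, if `c_j = dim (ker T ∩ im T^j)` (the number of Jordan blocks of size `> j`),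
then `x_m ∈ im T^j` exactly when `m ≤ c_j`.

The pairing `⟨A, B⟩ = ∑ A_{i,j} B_{r+1-i,s+1-j}` is nondegenerate, makes `T` self-adjoint and
pairs `D_d` only with `D_{r+s-d}`. Pairing a preimage of `x_a` under `T^j` against
`ker T ∩ im T^j` shows that `a ↦ r + s - j - a` maps `(c_{j+1}, c_j]` into itself, so
`c_j + c_{j+1} + j + 1 = r + s` whenever `c_{j+1} < c_j`.

For `j = λ - 1` we have `c_{j+1} = l₀ - 1 < c_j`, so `x_{c_j}`, where
`c_j = r + s + 1 - l₀ - λ`, has a preimage under `T^j` in `D_{c_j + j} = D_{r+s-l₀}`. Two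
preimages differ by some `z ∈ D_{c_j + j}` with `T^j z = 0`; if `z ≠ 0`, some `T^h z` with
`h < j` is a nonzero element of `ker T ∩ im T^h ∩ D_{c_j + j - h}`, so `c_j + j - h ≤ c_h`,
which the relation above excludes.
-/

namespace TensorJordan

open Submodule LinearMap Module
open scoped Finset Matrix

section Orthogonal

open LinearMap.BilinForm

lemma orthogonal_sup {R V : Type*} [CommRing R] [AddCommGroup V] [Module R V]
    (B : LinearMap.BilinForm R V) (U W : Submodule R V) :
    B.orthogonal (U ⊔ W) = B.orthogonal U ⊓ B.orthogonal W := by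
  ext z
  refine ⟨fun hz => ⟨fun n hn => hz n (mem_sup_left hn), fun n hn => hz n (mem_sup_right hn)⟩,
    fun ⟨hU, hW⟩ n hn => ?_⟩
  obtain ⟨u, hu, w, hw, rfl⟩ := Submodule.mem_sup.1 hn
  rw [map_add, LinearMap.add_apply, hU u hu, hW w hw, add_zero]

variable {K V : Type*} [Field K] [AddCommGroup V] [Module K V] [FiniteDimensional K V]
  {B : LinearMap.BilinForm K V} {f g : V →ₗ[K] V}

lemma orthogonal_range_eq_ker (hB : B.Nondegenerate) (hf : ∀ x y, B (f x) y = B x (f y)) :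
    B.orthogonal (range f) = ker f := by
  refine (Submodule.eq_of_le_of_finrank_le ?_ ?_).symm
  · rintro x hx _ ⟨v, rfl⟩
    rw [hf, mem_ker.1 hx, map_zero]
  · have := finrank_range_add_finrank_ker f
    rw [finrank_orthogonal hB]
    omega

lemma orthogonal_ker_eq_range (hB : B.Nondegenerate) (hf : ∀ x y, B (f x) y = B x (f y)) :
    B.orthogonal (ker f) = range f := by
  refine (Submodule.eq_of_le_of_finrank_le ?_ ?_).symm
  · rintro _ ⟨v, rfl⟩ n hn
    rw [← hf, mem_ker.1 hn, map_zero, LinearMap.zero_apply]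
  · have := finrank_range_add_finrank_ker f
    rw [finrank_orthogonal hB]
    omega

lemma mem_range_sup_ker_of_orthogonal (hB : B.Nondegenerate) (hB₀ : B.IsRefl)
    (hf : ∀ x y, B (f x) y = B x (f y)) (hg : ∀ x y, B (g x) y = B x (g y)) {z : V}
    (hz : ∀ u ∈ ker f ⊓ range g, B z u = 0) : z ∈ range f ⊔ ker g := by
  have h : ker f ⊓ range g = B.orthogonal (range f ⊔ ker g) := by
    rw [orthogonal_sup, orthogonal_range_eq_ker hB hf, orthogonal_ker_eq_range hB hg]
  rw [← orthogonal_orthogonal hB hB₀ (range f ⊔ ker g), ← h]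
  exact fun u hu => hB₀ _ _ (hz u hu)

end Orthogonal

lemma exists_pow_ne_zero_of_pow_eq_zero {R V : Type*} [Semiring R] [AddCommMonoid V]
    [Module R V] (f : Module.End R V) {z : V} (hz : z ≠ 0) {k : ℕ} (hk : (f ^ k) z = 0) :
    ∃ h < k, (f ^ h) z ≠ 0 ∧ f ((f ^ h) z) = 0 := by
  induction k with
  | zero => exact absurd hk hz
  | succ k ih =>
    by_cases hk' : (f ^ k) z = 0
    · obtain ⟨h, hh, hne, heq⟩ := ih hk'
      exact ⟨h, by omega, hne, heq⟩
    · exact ⟨k, by omega, hk', by rwa [← Module.End.mul_apply, ← pow_succ']⟩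

lemma sum_dite_succ_mul_rev {R : Type*} [NonUnitalNonAssocSemiring R] {n : ℕ}
    (f g : Fin n → R) :
    ∑ i : Fin n, (if h : (i : ℕ) + 1 < n then f ⟨i + 1, h⟩ else 0) * g i.rev =
      ∑ i : Fin n, f i * (if h : (i.rev : ℕ) + 1 < n then g ⟨i.rev + 1, h⟩ else 0) := by
  cases n with
  | zero => simp
  | succ n =>
    rw [Fin.sum_univ_castSucc, Fin.sum_univ_succ, dif_neg (by simp), dif_neg (by simp),
      zero_mul, mul_zero, add_zero, zero_add]
    refine Finset.sum_congr rfl fun i _ => ?_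
    have := i.isLt
    rw [dif_pos (by simp), dif_pos (by simp [Fin.val_rev]; omega)]
    congr 2
    ext
    simp [Fin.val_rev]
    omega

lemma le_card_filter_Icc_iff {P : ℕ → Prop} [DecidablePred P] {c m : ℕ}
    (hP : ∀ k, k + 1 ≤ c → P (k + 1) → P k) (hm1 : 1 ≤ m) (hmc : m ≤ c) :
    m ≤ #{k ∈ Finset.Icc 1 c | P k} ↔ P m := by
  have down : ∀ a b, a ≤ b → b ≤ c → P b → P a := by
    intro a b hab
    induction b, hab using Nat.le_induction with
    | base => exact fun _ h => h
    | succ b _ ih => exact fun hbc h => ih (by omega) (hP b hbc h)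
  constructor
  · intro hle
    by_contra hPm
    have hsub : {k ∈ Finset.Icc 1 c | P k} ⊆ Finset.Icc 1 (m - 1) := by
      intro k hk
      simp only [Finset.mem_filter, Finset.mem_Icc] at hk ⊢
      by_contra hkm
      exact hPm (down m k (by omega) hk.1.2 hk.2)
    have := Finset.card_le_card hsub
    simp only [Nat.card_Icc] at this
    omega
  · intro hPm
    have hsub : Finset.Icc 1 m ⊆ {k ∈ Finset.Icc 1 c | P k} := by
      intro k hk
      simp only [Finset.mem_filter, Finset.mem_Icc] at hk ⊢
      exact ⟨⟨hk.1, by omega⟩, down k m hk.2 hmc hPm⟩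
    simpa using Finset.card_le_card hsub

lemma add_lt_add_of_antitone_of_drop {c : ℕ → ℕ} {K : ℕ} (hc : Antitone c)
    (hdrop : ∀ j, c (j + 1) < c j → c j + c (j + 1) + j + 1 = K) {h j : ℕ}
    (hj : c (j + 1) < c j) (hhj : h < j) : c h + h < c j + j := by
  have hK := hdrop j hj
  -- A drop at `h` gives `c h + c (h + 1) + h = c j + c (j + 1) + j` with
  -- `c (h + 1) ≥ c j > c (j + 1)`; without a drop, `c h ≤ c (h + 1)` and we pass to `h + 1`.
  suffices key : ∀ d h, h + d + 1 = j → c h + h < c j + j from key (j - h - 1) h (by omega)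
  intro d
  induction d with
  | zero =>
    intro h hd
    obtain rfl : j = h + 1 := by omega
    by_cases hdr : c (h + 1) < c h
    · have := hdrop h hdr
      omega
    · omega
  | succ d ih =>
    intro h hd
    by_cases hdr : c (h + 1) < c h
    · have := hdrop h hdr
      have := hc (show h + 1 ≤ j by omega)
      omega
    · have := ih (h + 1) (by omega)
      omega

lemma card_filter_succ_le_eq_of_isLeast {lam : ℕ → ℕ} {c l l0 : ℕ}
    (hanti : ∀ i i', 1 ≤ i → i ≤ i' → i' ≤ c → lam i' ≤ lam i)
    (hl0 : IsLeast {i | 1 ≤ i ∧ i ≤ c ∧ lam i = lam l} l0) :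
    #{i ∈ Finset.Icc 1 c | lam l + 1 ≤ lam i} = l0 - 1 := by
  obtain ⟨⟨hl01, hl0c, hl0l⟩, hmin⟩ := hl0
  suffices {i ∈ Finset.Icc 1 c | lam l + 1 ≤ lam i} = Finset.Icc 1 (l0 - 1) by
    rw [this, Nat.card_Icc, Nat.add_sub_cancel]
  ext i
  simp only [Finset.mem_filter, Finset.mem_Icc]
  constructor
  · rintro ⟨⟨hi1, hic⟩, hlt⟩
    refine ⟨hi1, Nat.le_sub_one_of_lt (lt_of_not_ge fun hle => ?_)⟩
    have := hanti l0 i hl01 hle hic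
    omega
  · rintro ⟨hi1, hil⟩
    have hle := hanti i l0 hi1 (by omega) hl0c
    refine ⟨⟨hi1, by omega⟩, lt_of_le_of_ne (hl0l ▸ hle) fun heq => ?_⟩
    have := hmin ⟨hi1, by omega, heq.symm⟩
    omega

lemma le_card_filter_le_of_isLeast {lam : ℕ → ℕ} {c l l0 : ℕ}
    (hanti : ∀ i i', 1 ≤ i → i ≤ i' → i' ≤ c → lam i' ≤ lam i)
    (hl0 : IsLeast {i | 1 ≤ i ∧ i ≤ c ∧ lam i = lam l} l0) :
    l0 ≤ #{i ∈ Finset.Icc 1 c | lam l ≤ lam i} := by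
  obtain ⟨⟨hl01, hl0c, hl0l⟩, -⟩ := hl0
  have hsub : Finset.Icc 1 l0 ⊆ {i ∈ Finset.Icc 1 c | lam l ≤ lam i} := by
    intro i hi
    rw [Finset.mem_Icc] at hi
    rw [Finset.mem_filter, Finset.mem_Icc, ← hl0l]
    exact ⟨⟨hi.1, hi.2.trans hl0c⟩, hanti i l0 hi.1 hi.2 hl0c⟩
  simpa using Finset.card_le_card hsub

variable {F : Type*} [Field F] {r s : ℕ}

local notation "M" => Matrix (Fin r) (Fin s) F
local notation "T" => TT F r s

lemma TT_apply (A : M) (i : Fin r) (j : Fin s) :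
    T A i j = (if h : (i : ℕ) + 1 < r then A ⟨i + 1, h⟩ j else 0) +
      (if h : (j : ℕ) + 1 < s then A i ⟨j + 1, h⟩ else 0) := rfl

lemma vv_succ_succ (i : Fin r) (j : Fin s) :
    vv F r s ((i : ℕ) + 1 : ℕ) ((j : ℕ) + 1 : ℕ) = Matrix.single i j 1 := by
  ext a b
  simp only [vv, Matrix.of_apply, Matrix.single_apply, Fin.ext_iff]
  congr 1
  apply propext
  constructor <;> rintro ⟨h1, h2⟩ <;> constructor <;> omega

-- Matrix indices are 0-based: the entry `(i, j)` is the coefficient of `v_{i+1,j+1}`.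
lemma mem_Dd_iff {d : ℕ} {A : M} :
    A ∈ Dd F r s d ↔ ∀ (i : Fin r) (j : Fin s), (i : ℕ) + j + 1 ≠ d → A i j = 0 := by
  constructor
  · intro hA
    induction hA using Submodule.span_induction with
    | mem B hB =>
      obtain ⟨a, b, -, -, -, -, hab, rfl⟩ := hB
      intro i j hij
      simp only [vv, Matrix.of_apply, ite_eq_right_iff]
      omega
    | zero => intro _ _ _; rfl
    | add B C _ _ hB hC => intro i j hij; simp [hB i j hij, hC i j hij]
    | smul c B _ hB => intro i j hij; simp [hB i j hij]
  · intro hA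
    rw [Matrix.matrix_eq_sum_single A]
    refine Submodule.sum_mem _ fun i _ => Submodule.sum_mem _ fun j _ => ?_
    by_cases hij : (i : ℕ) + j + 1 = d
    · rw [← mul_one (A i j), ← smul_eq_mul, ← Matrix.smul_single, ← vv_succ_succ]
      exact Submodule.smul_mem _ _ (Submodule.subset_span
        ⟨i + 1, j + 1, by omega, by omega, by omega, by omega, by omega, rfl⟩)
    · rw [hA i j hij, Matrix.single_zero]
      exact Submodule.zero_mem _

variable (F r s) in
def diagProj (d : ℕ) : M →ₗ[F] M where
  toFun A := Matrix.of fun i j => if (i : ℕ) + j + 1 = d then A i j else 0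
  map_add' A B := by ext i j; simp only [Matrix.of_apply, Matrix.add_apply]; split_ifs <;> simp
  map_smul' c A := by ext i j; simp [Matrix.of_apply, Matrix.smul_apply]

lemma diagProj_apply (d : ℕ) (A : M) (i : Fin r) (j : Fin s) :
    diagProj F r s d A i j = if (i : ℕ) + j + 1 = d then A i j else 0 := rfl

lemma diagProj_mem_Dd (d : ℕ) (A : M) : diagProj F r s d A ∈ Dd F r s d :=
  mem_Dd_iff.2 fun _ _ hij => if_neg hij

lemma diagProj_eq_self {d : ℕ} {A : M} (hA : A ∈ Dd F r s d) : diagProj F r s d A = A := by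
  ext i j
  rw [diagProj_apply]
  split_ifs with h
  · rfl
  · exact (mem_Dd_iff.1 hA i j h).symm

lemma diagProj_eq_zero {d m : ℕ} {A : M} (hA : A ∈ Dd F r s m) (hmd : m ≠ d) :
    diagProj F r s d A = 0 := by
  ext i j
  rw [diagProj_apply]
  split_ifs with h
  · exact mem_Dd_iff.1 hA i j (by omega)
  · rfl

lemma TT_diagProj_succ (d : ℕ) (A : M) :
    T (diagProj F r s (d + 1) A) = diagProj F r s d (T A) := by
  ext i j
  simp only [TT_apply, diagProj_apply]
  split_ifs <;> first | rfl | (exfalso; omega) | simp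

lemma TT_pow_diagProj (k d : ℕ) (A : M) :
    (T ^ k) (diagProj F r s (d + k) A) = diagProj F r s d ((T ^ k) A) := by
  induction k generalizing A with
  | zero => rfl
  | succ k ih =>
    rw [pow_succ, Module.End.mul_apply, Module.End.mul_apply, ← add_assoc, TT_diagProj_succ, ih]

lemma TT_pow_mem_Dd {d k : ℕ} {A : M} (hA : A ∈ Dd F r s (d + k)) :
    (T ^ k) A ∈ Dd F r s d := by
  rw [← diagProj_eq_self hA, TT_pow_diagProj]
  exact diagProj_mem_Dd _ _

lemma diagProj_mem_range_pow {d j : ℕ} {u : M} (hu : u ∈ range (T ^ j)) :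
    diagProj F r s d u ∈ range (T ^ j) := by
  obtain ⟨w, rfl⟩ := hu
  exact ⟨diagProj F r s (d + j) w, TT_pow_diagProj j d w⟩

variable (F r s) in
def xv (m : ℕ) : M := xx F r s m

lemma xv_apply (m : ℕ) (i : Fin r) (j : Fin s) :
    xv F r s m i j = if (i : ℕ) + j + 1 = m then (-1 : F) ^ (i : ℕ) else 0 := by
  simp only [xv, xx, Int.toNat_natCast, Matrix.sum_apply, Matrix.smul_apply, vv,
    Matrix.of_apply, smul_eq_mul, mul_ite, mul_one, mul_zero]
  split_ifs with h
  · rw [Finset.sum_eq_single (i : ℕ) (fun k _ hk => if_neg fun h' => hk (by omega))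
      (fun hi => absurd (Finset.mem_range.2 (by omega)) hi), if_pos ⟨rfl, by omega⟩]
  · exact Finset.sum_eq_zero fun k _ => if_neg fun h' => h (by omega)

lemma xv_mem_Dd (m : ℕ) : xv F r s m ∈ Dd F r s m :=
  mem_Dd_iff.2 fun i j h => by rw [xv_apply, if_neg h]

lemma TT_xv {m : ℕ} (hm : m ≤ min r s) : T (xv F r s m) = 0 := by
  ext i j
  simp only [TT_apply, xv_apply]
  have := Nat.min_le_left r s
  have := Nat.min_le_right r s
  split_ifs <;> first | rfl | (exfalso; omega) | (simp only [Matrix.zero_apply]; ring)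

variable (F r s) in
def rowShift : M →ₗ[F] M where
  toFun A := Matrix.of fun i j => if h : (i : ℕ) + 1 < r then A ⟨i + 1, h⟩ j else 0
  map_add' A B := by ext i j; simp only [Matrix.of_apply, Matrix.add_apply]; split_ifs <;> simp
  map_smul' c A := by ext i j; simp [Matrix.of_apply, Matrix.smul_apply]

lemma rowShift_apply (A : M) (i : Fin r) (j : Fin s) :
    rowShift F r s A i j = if h : (i : ℕ) + 1 < r then A ⟨i + 1, h⟩ j else 0 := rfl

lemma commute_rowShift_TT : Commute (rowShift F r s) T := by
  ext A i j
  simp only [Module.End.mul_apply, TT_apply, rowShift_apply]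
  split_ifs <;> first | rfl | simp

lemma rowShift_xv_succ {m : ℕ} (hm : m + 1 ≤ r) :
    rowShift F r s (xv F r s (m + 1)) = -xv F r s m := by
  ext i j
  simp only [rowShift_apply, xv_apply, Matrix.neg_apply]
  split_ifs <;> first | rfl | (exfalso; omega) | (rw [pow_succ]; ring) | simp

lemma xv_mem_range_pow_of_succ {m j : ℕ} (hm : m + 1 ≤ r)
    (h : xv F r s (m + 1) ∈ range (T ^ j)) : xv F r s m ∈ range (T ^ j) := by
  obtain ⟨w, hw⟩ := h
  refine ⟨-rowShift F r s w, ?_⟩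
  rw [map_neg, ← Module.End.mul_apply, ← ((commute_rowShift_TT).pow_right j).eq,
    Module.End.mul_apply, hw, rowShift_xv_succ hm, neg_neg]

lemma linearIndepOn_xv : LinearIndepOn F (xv F r s) (Finset.Icc 1 (min r s) : Set ℕ) := by
  rw [LinearIndepOn, Fintype.linearIndependent_iff]
  rintro g hg ⟨m, hm⟩
  rw [Finset.mem_coe, Finset.mem_Icc] at hm
  have h := congrFun (congrFun hg ⟨0, by omega⟩) ⟨m - 1, by omega⟩
  simp only [Matrix.sum_apply, Matrix.smul_apply, xv_apply, smul_eq_mul, Matrix.zero_apply] at h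
  rwa [Finset.sum_eq_single ⟨m, by simpa using hm⟩, if_pos (by simp; omega), pow_zero,
    mul_one] at h
  · rintro ⟨k, hk⟩ - hkm
    rw [if_neg fun hk' => hkm (Subtype.ext (by simp only at hk' ⊢; omega)), mul_zero]
  · simp

lemma finrank_span_xv {S : Finset ℕ} (hS : S ⊆ Finset.Icc 1 (min r s)) :
    finrank F (span F (xv F r s '' S)) = #S := by
  classical
  have hli := (linearIndepOn_xv (F := F)).mono (Finset.coe_subset.2 hS)
  rw [← Finset.coe_image, finrank_span_finset_eq_card (by simpa using hli.id_image),
    Finset.card_image_of_injOn hli.injOn]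

lemma ker_eq_span_xv (hdim : finrank F (ker T) = min r s) :
    ker T = span F (xv F r s '' Finset.Icc 1 (min r s)) := by
  refine (Submodule.eq_of_le_of_finrank_le ?_ ?_).symm
  · rw [Submodule.span_le]
    rintro _ ⟨m, hm, rfl⟩
    exact TT_xv (Finset.mem_Icc.1 hm).2
  · rw [finrank_span_xv subset_rfl, hdim, Nat.card_Icc]
    omega

lemma diagProj_sum_smul_xv {S : Finset ℕ} (γ : ℕ → F) {m : ℕ} (hm : m ∈ S) :
    diagProj F r s m (∑ k ∈ S, γ k • xv F r s k) = γ m • xv F r s m := by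
  rw [map_sum, Finset.sum_eq_single m (fun k _ hk => by
    rw [map_smul, diagProj_eq_zero (xv_mem_Dd k) hk, smul_zero]) (absurd hm),
    map_smul, diagProj_eq_self (xv_mem_Dd m)]

variable (F r s) in
/-- The number of Jordan blocks of `T` of size greater than `j`. -/
def blockCount (j : ℕ) : ℕ := finrank F ↥(ker T ⊓ range (T ^ j))

lemma blockCount_antitone : Antitone (blockCount F r s) :=
  fun _ _ h => Submodule.finrank_mono (inf_le_inf_left _ ((iterateRange T).monotone h))

lemma blockCount_add_finrank_range_pow_succ (j : ℕ) :
    blockCount F r s j + finrank F (range (T ^ (j + 1))) = finrank F (range (T ^ j)) := by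
  have h := finrank_range_add_finrank_ker ((TT F r s).domRestrict (range (T ^ j)))
  rw [range_domRestrict, ker_domRestrict] at h
  have hmap : (range (T ^ j)).map T = range (T ^ (j + 1)) := by
    rw [pow_succ', Module.End.mul_eq_comp, range_comp]
  have hker : finrank F ((ker T).comap (range (T ^ j)).subtype) = blockCount F r s j := by
    rw [blockCount, LinearEquiv.finrank_eq (Submodule.equivMapOfInjective _
      (Submodule.injective_subtype _) _), Submodule.map_comap_subtype, inf_comm]
  rw [hmap, hker] at h
  omega

variable (F r s) in
def rangeIndices (j : ℕ) : Finset ℕ :=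
  open scoped Classical in {m ∈ Finset.Icc 1 (min r s) | xv F r s m ∈ range (T ^ j)}

lemma mem_rangeIndices {j m : ℕ} :
    m ∈ rangeIndices F r s j ↔
      (1 ≤ m ∧ m ≤ min r s) ∧ xv F r s m ∈ range (T ^ j) := by
  classical
  rw [rangeIndices, Finset.mem_filter, Finset.mem_Icc]

lemma ker_inf_range_pow_eq_span (hdim : finrank F (ker T) = min r s) (j : ℕ) :
    ker T ⊓ range (T ^ j) = span F (xv F r s '' rangeIndices F r s j) := by
  refine le_antisymm (fun u hu => ?_) (Submodule.span_le.2 ?_)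
  · obtain ⟨hu, hur⟩ := hu
    rw [ker_eq_span_xv hdim] at hu
    obtain ⟨γ, rfl⟩ := (Submodule.mem_span_image_finset_iff_exists_fun' F).1 hu
    refine Submodule.sum_mem _ fun m hm => ?_
    by_cases hγ : γ m = 0
    · rw [hγ, zero_smul]
      exact Submodule.zero_mem _
    have hproj := diagProj_mem_range_pow (d := m) hur
    rw [diagProj_sum_smul_xv γ hm] at hproj
    refine Submodule.smul_mem _ _ (Submodule.subset_span ⟨m, ?_, rfl⟩)
    exact mem_rangeIndices.2 ⟨Finset.mem_Icc.1 hm, (Submodule.smul_mem_iff _ hγ).1 hproj⟩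
  · rintro _ ⟨m, hm, rfl⟩
    obtain ⟨⟨-, hmc⟩, hmr⟩ := mem_rangeIndices.1 hm
    exact ⟨TT_xv hmc, hmr⟩

lemma blockCount_eq_card (hdim : finrank F (ker T) = min r s) (j : ℕ) :
    blockCount F r s j = #(rangeIndices F r s j) := by
  rw [blockCount, ker_inf_range_pow_eq_span hdim,
    finrank_span_xv fun _ hm => Finset.mem_Icc.2 (mem_rangeIndices.1 hm).1]

lemma xv_mem_range_pow_iff (hdim : finrank F (ker T) = min r s) {j m : ℕ} (hm1 : 1 ≤ m)
    (hmc : m ≤ min r s) : xv F r s m ∈ range (T ^ j) ↔ m ≤ blockCount F r s j := by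
  classical
  rw [blockCount_eq_card hdim, rangeIndices, le_card_filter_Icc_iff (fun k hk =>
    xv_mem_range_pow_of_succ (hk.trans (Nat.min_le_left r s))) hm1 hmc]

lemma le_blockCount_of_mem_Dd (hdim : finrank F (ker T) = min r s) {d j : ℕ} {w : M}
    (hwd : w ∈ Dd F r s d) (hw : w ∈ ker T ⊓ range (T ^ j)) (hw0 : w ≠ 0) :
    d ≤ blockCount F r s j := by
  rw [ker_inf_range_pow_eq_span hdim] at hw
  by_cases hd : d ∈ rangeIndices F r s j
  · obtain ⟨⟨hd1, hdc⟩, hdr⟩ := mem_rangeIndices.1 hd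
    exact (xv_mem_range_pow_iff hdim hd1 hdc).1 hdr
  · refine absurd ?_ hw0
    have hle : span F (xv F r s '' rangeIndices F r s j) ≤ ker (diagProj F r s d) := by
      rw [Submodule.span_le]
      rintro _ ⟨m, hm, rfl⟩
      exact diagProj_eq_zero (xv_mem_Dd m) fun h => hd (h ▸ hm)
    rw [← diagProj_eq_self hwd]
    exact hle hw

variable (F r s) in
def revPairing : M →ₗ[F] M →ₗ[F] F :=
  LinearMap.mk₂ F (fun A B => ∑ i : Fin r, ∑ j : Fin s, A i j * B i.rev j.rev)
    (fun _ _ _ => by simp only [Matrix.add_apply, add_mul, Finset.sum_add_distrib])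
    (fun _ _ _ => by simp only [Matrix.smul_apply, smul_eq_mul, mul_assoc, Finset.mul_sum])
    (fun _ _ _ => by simp only [Matrix.add_apply, mul_add, Finset.sum_add_distrib])
    (fun _ _ _ => by simp only [Matrix.smul_apply, smul_eq_mul, mul_left_comm, Finset.mul_sum])

lemma revPairing_apply (A B : M) :
    revPairing F r s A B = ∑ i : Fin r, ∑ j : Fin s, A i j * B i.rev j.rev := rfl

lemma revPairing_transpose (A B : M) :
    revPairing F s r Aᵀ Bᵀ = revPairing F r s A B := by
  simp only [revPairing_apply, Matrix.transpose_apply]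
  exact Finset.sum_comm

lemma revPairing_symm (A B : M) : revPairing F r s A B = revPairing F r s B A := by
  rw [revPairing_apply, revPairing_apply, ← Equiv.sum_comp Fin.revPerm]
  refine Finset.sum_congr rfl fun i _ => ?_
  rw [← Equiv.sum_comp Fin.revPerm]
  simp only [Fin.revPerm_apply, Fin.rev_rev, mul_comm]

lemma revPairing_rowShift (A B : M) :
    revPairing F r s (rowShift F r s A) B = revPairing F r s A (rowShift F r s B) := by
  simp only [revPairing_apply, rowShift_apply]
  rw [Finset.sum_comm, Finset.sum_comm (γ := Fin r)]
  exact Finset.sum_congr rfl fun j _ => sum_dite_succ_mul_rev (A · j) (B · j.rev)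

lemma TT_eq_rowShift_add (A : M) :
    T A = rowShift F r s A + (rowShift F s r Aᵀ)ᵀ := rfl

lemma revPairing_TT (A B : M) : revPairing F r s (T A) B = revPairing F r s A (T B) := by
  have hA := revPairing_transpose (rowShift F s r Aᵀ)ᵀ B
  have hB := revPairing_transpose A (rowShift F s r Bᵀ)ᵀ
  rw [Matrix.transpose_transpose] at hA hB
  rw [TT_eq_rowShift_add, TT_eq_rowShift_add, map_add, map_add, LinearMap.add_apply,
    revPairing_rowShift, ← hA, ← hB, revPairing_rowShift]

lemma revPairing_TT_pow (k : ℕ) (A B : M) :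
    revPairing F r s ((T ^ k) A) B = revPairing F r s A ((T ^ k) B) := by
  induction k generalizing A with
  | zero => rfl
  | succ k ih =>
    calc revPairing F r s ((T ^ (k + 1)) A) B = revPairing F r s ((T ^ k) (T A)) B := by
          rw [pow_succ, Module.End.mul_apply]
      _ = revPairing F r s A (T ((T ^ k) B)) := by rw [ih, revPairing_TT]
      _ = revPairing F r s A ((T ^ (k + 1)) B) := by rw [pow_succ', Module.End.mul_apply]

lemma revPairing_single_rev (A : M) (i : Fin r) (j : Fin s) :
    revPairing F r s A (Matrix.single i.rev j.rev 1) = A i j := by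
  simp [revPairing_apply, Matrix.single_apply, ite_and]

lemma revPairing_eq_zero_of_mem_Dd {d₁ d₂ : ℕ} {A B : M} (hA : A ∈ Dd F r s d₁)
    (hB : B ∈ Dd F r s d₂) (hd : d₁ + d₂ ≠ r + s) : revPairing F r s A B = 0 := by
  rw [revPairing_apply]
  refine Finset.sum_eq_zero fun i _ => Finset.sum_eq_zero fun j _ => ?_
  by_cases h : (i : ℕ) + j + 1 = d₁
  · rw [mem_Dd_iff.1 hB i.rev j.rev (by simp only [Fin.val_rev]; omega), mul_zero]
  · rw [mem_Dd_iff.1 hA i j h, zero_mul]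

lemma revPairing_isRefl : LinearMap.BilinForm.IsRefl (revPairing F r s) := fun A B h => by
  rwa [revPairing_symm]

lemma revPairing_nondegenerate : LinearMap.BilinForm.Nondegenerate (revPairing F r s) := by
  unfold LinearMap.BilinForm.Nondegenerate
  rw [LinearMap.IsRefl.nondegenerate_iff_separatingLeft
    (revPairing_isRefl (F := F) (r := r) (s := s))]
  intro A hA
  ext i j
  rw [← revPairing_single_rev A i j, hA, Matrix.zero_apply]

lemma exists_preimage_mem_Dd {m j : ℕ} {x : M} (hxd : x ∈ Dd F r s m)
    (hx : x ∈ range (T ^ j)) :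
    ∃ y ∈ Dd F r s (m + j), (T ^ j) y = x := by
  obtain ⟨w, rfl⟩ := hx
  exact ⟨diagProj F r s (m + j) w, diagProj_mem_Dd _ _, by
    rw [TT_pow_diagProj, diagProj_eq_self hxd]⟩

lemma blockCount_le (hdim : finrank F (ker T) = min r s) (j : ℕ) :
    blockCount F r s j ≤ min r s :=
  hdim ▸ Submodule.finrank_mono inf_le_left

lemma exists_mirror (hdim : finrank F (ker T) = min r s) {j a : ℕ}
    (ha₁ : blockCount F r s (j + 1) < a) (ha₂ : a ≤ blockCount F r s j) :
    ∃ b, blockCount F r s (j + 1) < b ∧ b ≤ blockCount F r s j ∧ a + j + b = r + s := by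
  classical
  have hac : a ≤ min r s := ha₂.trans (blockCount_le hdim j)
  have hout : xv F r s a ∉ range (T ^ (j + 1)) := fun h =>
    (xv_mem_range_pow_iff hdim (by omega) hac).1 h |>.not_gt ha₁
  obtain ⟨z, hzd, hz⟩ := exists_preimage_mem_Dd (xv_mem_Dd a)
    ((xv_mem_range_pow_iff hdim (by omega) hac).2 ha₂)
  -- Otherwise `z ∈ range T ⊔ ker T^j`, whence `x_a = T^j z ∈ range T^(j+1)`.
  have hpair : ∃ u ∈ ker T ⊓ range (T ^ j), revPairing F r s z u ≠ 0 := by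
    by_contra! hperp
    obtain ⟨_, ⟨v, rfl⟩, w, hw, rfl⟩ := Submodule.mem_sup.1 <|
      mem_range_sup_ker_of_orthogonal revPairing_nondegenerate revPairing_isRefl
        revPairing_TT (revPairing_TT_pow j) hperp
    refine hout ⟨v, ?_⟩
    rw [← hz, map_add, mem_ker.1 hw, add_zero, pow_succ, Module.End.mul_apply]
  obtain ⟨u, hu, hzu⟩ := hpair
  rw [ker_inf_range_pow_eq_span hdim] at hu
  obtain ⟨b, hb, hzb⟩ :
      ∃ b ∈ rangeIndices F r s j, revPairing F r s z (xv F r s b) ≠ 0 := by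
    by_contra! hall
    refine hzu (Submodule.span_le (p := ker (revPairing F r s z)) |>.2 ?_ hu)
    rintro _ ⟨b, hb, rfl⟩
    exact hall b hb
  obtain ⟨⟨hb1, hbc⟩, hbr⟩ := mem_rangeIndices.1 hb
  refine ⟨b, ?_, (xv_mem_range_pow_iff hdim hb1 hbc).1 hbr, ?_⟩
  · by_contra! hle
    obtain ⟨v, hv⟩ := (xv_mem_range_pow_iff hdim hb1 hbc).2 hle
    refine hzb ?_
    rw [← hv, ← revPairing_TT_pow, pow_succ', Module.End.mul_apply, hz, TT_xv hac, map_zero,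
      LinearMap.zero_apply]
  · by_contra hne
    exact hzb (revPairing_eq_zero_of_mem_Dd hzd (xv_mem_Dd b) hne)

lemma blockCount_add_blockCount_succ (hdim : finrank F (ker T) = min r s) {j : ℕ}
    (hj : blockCount F r s (j + 1) < blockCount F r s j) :
    blockCount F r s j + blockCount F r s (j + 1) + j + 1 = r + s := by
  obtain ⟨b₁, hb₁, -, h₁⟩ := exists_mirror hdim hj le_rfl
  obtain ⟨b₂, -, hb₂, h₂⟩ := exists_mirror hdim (lt_add_one _) hj
  omega

lemma eq_zero_of_mem_Dd_of_pow_eq_zero (hdim : finrank F (ker T) = min r s) {n k : ℕ} {z : M}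
    (hzd : z ∈ Dd F r s n) (hk : (T ^ k) z = 0)
    (hbound : ∀ h < k, blockCount F r s h + h < n) : z = 0 := by
  by_contra hz
  obtain ⟨h, hhk, hw0, hw⟩ := exists_pow_ne_zero_of_pow_eq_zero T hz hk
  have hb := hbound h hhk
  have hwd : (T ^ h) z ∈ Dd F r s (n - h) :=
    TT_pow_mem_Dd (by rwa [Nat.sub_add_cancel (by omega)])
  have := le_blockCount_of_mem_Dd hdim hwd ⟨hw, z, rfl⟩ hw0
  omega

theorem existsUnique_preimage_xv (hdim : finrank F (ker T) = min r s) {j : ℕ}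
    (hj : blockCount F r s (j + 1) < blockCount F r s j) :
    ∃! y : M, y ∈ Dd F r s (blockCount F r s j + j) ∧
      (T ^ j) y = xv F r s (blockCount F r s j) := by
  obtain ⟨y, hyd, hy⟩ := exists_preimage_mem_Dd (xv_mem_Dd _)
    ((xv_mem_range_pow_iff hdim (by omega) (blockCount_le hdim j)).2 le_rfl)
  refine ⟨y, ⟨hyd, hy⟩, fun y' ⟨hy'd, hy'⟩ => sub_eq_zero.1 ?_⟩
  refine eq_zero_of_mem_Dd_of_pow_eq_zero hdim (Submodule.sub_mem _ hy'd hyd)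
    (by rw [map_sub, hy', hy, sub_self]) fun h hh => ?_
  exact add_lt_add_of_antitone_of_drop blockCount_antitone
    (fun i hi => blockCount_add_blockCount_succ hdim hi) hj hh

theorem _root_.IsJordanType.blockCount_eq {lam : ℕ → ℕ}
    (hlam : IsJordanType F r s lam) (j : ℕ) :
    blockCount F r s j = #{i ∈ Finset.Icc 1 (min r s) | j + 1 ≤ lam i} := by
  have := hlam.2.2 (j + 1) (by omega)
  have := blockCount_add_finrank_range_pow_succ (F := F) (r := r) (s := s) j
  rw [Nat.add_sub_cancel] at *
  omega

theorem _root_.IsJordanType.finrank_ker {lam : ℕ → ℕ}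
    (hlam : IsJordanType F r s lam) : finrank F (ker T) = min r s := by
  have h := hlam.blockCount_eq 0
  rw [blockCount, pow_zero, Module.End.one_eq_id, range_id, inf_top_eq,
    Finset.filter_true_of_mem fun i hi =>
      show 0 + 1 ≤ lam i from hlam.1 i (Finset.mem_Icc.1 hi).1 (Finset.mem_Icc.1 hi).2,
    Nat.card_Icc] at h
  omega

end TensorJordan

open TensorJordan

theorem stmt1_general (F : Type*) [Field F]
    (r s : ℕ)
    (lam : ℕ → ℕ) (hlam : IsJordanType F r s lam)
    (l : ℕ) (hl1 : 1 ≤ l) (hl2 : l ≤ min r s)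
    (l0 : ℕ) (hl0 : IsLeast {i : ℕ | 1 ≤ i ∧ i ≤ min r s ∧ lam i = lam l} l0) :
    ∃! y : Matrix (Fin r) (Fin s) F,
      y ∈ Dd F r s (r + s - l0) ∧
      ((TT F r s) ^ (lam l - 1)) y =
        xx F r s ((r : ℤ) + s + 1 - l0 - lam l) := by
  have hdim := hlam.finrank_ker
  have hpos : 1 ≤ lam l := hlam.1 l hl1 hl2
  have hl01 : 1 ≤ l0 := hl0.1.1
  have hnext : blockCount F r s (lam l - 1 + 1) = l0 - 1 := by
    rw [hlam.blockCount_eq, Nat.sub_add_cancel hpos]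
    exact card_filter_succ_le_eq_of_isLeast hlam.2.1 hl0
  have hcur : l0 ≤ blockCount F r s (lam l - 1) := by
    rw [hlam.blockCount_eq, Nat.sub_add_cancel hpos]
    exact le_card_filter_le_of_isLeast hlam.2.1 hl0
  have hdrop : blockCount F r s (lam l - 1 + 1) < blockCount F r s (lam l - 1) := by omega
  have hsum := blockCount_add_blockCount_succ hdim hdrop
  have hdeg : r + s - l0 = blockCount F r s (lam l - 1) + (lam l - 1) := by omega
  have hidx : (r : ℤ) + s + 1 - l0 - lam l = (blockCount F r s (lam l - 1) : ℕ) := by omega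
  rw [hdeg, hidx]
  exact existsUnique_preimage_xv hdim hdrop

/-- unique `y ∈ D_{r+s-l₀}` with `T^{λ-1} y = x_{r+s+1-l₀-λ}`. -/
theorem stmt1 (p : ℕ) (hp : p.Prime) (F : Type*) [Field F] [CharP F p]
    (r s : ℕ) (hr : 0 < r) (hs : 0 < s)
    (lam : ℕ → ℕ) (hlam : IsJordanType F r s lam)
    (l : ℕ) (hl1 : 1 ≤ l) (hl2 : l ≤ min r s)
    (l0 : ℕ) (hl0 : IsLeast {i : ℕ | 1 ≤ i ∧ i ≤ min r s ∧ lam i = lam l} l0) :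
    ∃! y : Matrix (Fin r) (Fin s) F,
      y ∈ Dd F r s (r + s - l0) ∧
      ((TT F r s) ^ (lam l - 1)) y =
        xx F r s ((r : ℤ) + s + 1 - l0 - lam l) :=
  stmt1_general F r s lam hlam l hl1 hl2 l0 hl0
end
end

section
/- Let 1 <= l_0 < l <= min(r,s) with lambda_l(r,s) = lambda_{l_0}(r,s) =: lambda. Suppose c_1, ..., c_{l_0} in F are such that y_{l_0} = sum_{j=1}^{l_0} c_j v_{r-l_0+j,s+1-j} satisfies T^{lambda-1}(y_{l_0}) = x_{r+s+1-l_0-lambda}. Then the element y_l = (-1)^{l-l_0} sum_{j=1}^{l_0} c_j v_{r-l+j,s+1-j} of M(r,s) satisfies T^{lambda-1}(y_l) = x_{r+s+1-l-lambda}. -/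
open scoped BigOperators

noncomputable section

section Aux

variable (F : Type*) [Field F] (r s : ℕ)

/-- row shift `S₁ : v_{a,b} ↦ v_{a-1,b}`. -/
def S1 : Matrix (Fin r) (Fin s) F →ₗ[F] Matrix (Fin r) (Fin s) F where
  toFun A := Matrix.of fun i j => if h : (i : ℕ) + 1 < r then A ⟨(i : ℕ) + 1, h⟩ j else 0
  map_add' A B := by
    ext i j
    simp only [Matrix.of_apply, Matrix.add_apply]
    split_ifs <;> simp
  map_smul' c A := by
    ext i j
    simp only [Matrix.of_apply, Matrix.smul_apply, RingHom.id_apply, smul_eq_mul]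
    split_ifs <;> ring

/-- column shift `S₂ : v_{a,b} ↦ v_{a,b-1}`. -/
def S2 : Matrix (Fin r) (Fin s) F →ₗ[F] Matrix (Fin r) (Fin s) F where
  toFun A := Matrix.of fun i j => if h : (j : ℕ) + 1 < s then A i ⟨(j : ℕ) + 1, h⟩ else 0
  map_add' A B := by
    ext i j
    simp only [Matrix.of_apply, Matrix.add_apply]
    split_ifs <;> simp
  map_smul' c A := by
    ext i j
    simp only [Matrix.of_apply, Matrix.smul_apply, RingHom.id_apply, smul_eq_mul]
    split_ifs <;> ring

variable {F r s}

lemma S1_apply (A : Matrix (Fin r) (Fin s) F) (i : Fin r) (k : Fin s) :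
    S1 F r s A i k = if h : (i : ℕ) + 1 < r then A ⟨(i : ℕ) + 1, h⟩ k else 0 := rfl

lemma S2_apply (A : Matrix (Fin r) (Fin s) F) (i : Fin r) (k : Fin s) :
    S2 F r s A i k = if h : (k : ℕ) + 1 < s then A i ⟨(k : ℕ) + 1, h⟩ else 0 := rfl

lemma TT_apply (A : Matrix (Fin r) (Fin s) F) (i : Fin r) (k : Fin s) :
    TT F r s A i k = (if h : (i : ℕ) + 1 < r then A ⟨(i : ℕ) + 1, h⟩ k else 0) +
      (if h : (k : ℕ) + 1 < s then A i ⟨(k : ℕ) + 1, h⟩ else 0) := rfl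

lemma TT_eq : TT F r s = S1 F r s + S2 F r s := by
  ext A i k
  simp [TT_apply, S1_apply, S2_apply]

lemma commS1S2 : Commute (S1 F r s) (S2 F r s) := by
  refine LinearMap.ext fun A => ?_
  ext i k
  show S1 F r s (S2 F r s A) i k = S2 F r s (S1 F r s A) i k
  simp only [S1_apply, S2_apply]
  split_ifs <;> rfl

lemma commS1TT : Commute (S1 F r s) (TT F r s) := by
  rw [TT_eq]
  exact (Commute.refl _).add_right commS1S2

lemma vv_apply (a b : ℤ) (i : Fin r) (k : Fin s) :
    vv F r s a b i k = if (i : ℤ) + 1 = a ∧ (k : ℤ) + 1 = b then 1 else 0 := rfl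

end Aux
section Aux2

variable {F : Type*} [Field F] {r s : ℕ}

lemma S1_vv (a b : ℤ) (ha : a ≤ r) :
    S1 F r s (vv F r s a b) = vv F r s (a - 1) b := by
  ext i k
  have hi := i.isLt
  simp only [S1_apply, vv_apply]
  split_ifs <;> first | rfl | (exfalso; push_cast at *; omega)

lemma S2_vv (a b : ℤ) (hb : b ≤ s) :
    S2 F r s (vv F r s a b) = vv F r s a (b - 1) := by
  ext i k
  have hk := k.isLt
  simp only [S2_apply, vv_apply]
  split_ifs <;> first | rfl | (exfalso; push_cast at *; omega)

lemma S1_pow_vv : ∀ (n : ℕ) (a b : ℤ), a ≤ r →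
    ((S1 F r s) ^ n) (vv F r s a b) = vv F r s (a - n) b := by
  intro n
  induction n with
  | zero => intro a b _; simp
  | succ n ih =>
      intro a b ha
      rw [pow_succ, Module.End.mul_apply, S1_vv a b ha, ih (a - 1) b (by omega)]
      congr 1
      push_cast
      ring

lemma S2_pow_vv : ∀ (n : ℕ) (a b : ℤ), b ≤ s →
    ((S2 F r s) ^ n) (vv F r s a b) = vv F r s a (b - n) := by
  intro n
  induction n with
  | zero => intro a b _; simp
  | succ n ih =>
      intro a b hb
      rw [pow_succ, Module.End.mul_apply, S2_vv a b hb, ih a (b - 1) (by omega)]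
      congr 1
      push_cast
      ring

lemma TT_pow_vv (N : ℕ) (a b : ℤ) (ha : a ≤ r) (hb : b ≤ s) :
    ((TT F r s) ^ N) (vv F r s a b) =
      ∑ u ∈ Finset.range (N + 1),
        ((N.choose u : F)) • vv F r s (a - u) (b - N + u) := by
  rw [TT_eq, (commS1S2 (F := F) (r := r) (s := s)).add_pow]
  rw [LinearMap.sum_apply]
  refine Finset.sum_congr rfl fun u hu => ?_
  have hu' : u ≤ N := by
    have := Finset.mem_range.mp hu; omega
  rw [Module.End.mul_apply, Module.End.mul_apply, Module.End.natCast_apply]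
  rw [map_nsmul, map_nsmul, S2_pow_vv (N - u) a b hb, S1_pow_vv u a (b - (N - u : ℕ)) ha]
  rw [← Nat.cast_smul_eq_nsmul F]
  congr 2
  · push_cast [Nat.cast_sub hu']
    ring

end Aux2
section Aux3

variable {F : Type*} [Field F] {r s : ℕ}

lemma xx_apply (m : ℤ) (i : Fin r) (k : Fin s) :
    xx F r s m i k = if (i : ℤ) + (k : ℤ) + 2 = m + 1 then ((-1 : F)) ^ (i : ℕ) else 0 := by
  have hi := i.isLt
  have hk := k.isLt
  unfold xx
  rw [Matrix.sum_apply]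
  simp only [Matrix.smul_apply, vv_apply, smul_eq_mul]
  by_cases hd : (i : ℤ) + (k : ℤ) + 2 = m + 1
  · rw [if_pos hd]
    rw [Finset.sum_eq_single (i : ℕ)]
    · rw [if_pos ⟨by push_cast; ring, by push_cast; omega⟩, mul_one]
    · intro j hj hji
      rw [if_neg, mul_zero]
      rintro ⟨hc1, hc2⟩
      exact hji (by push_cast at hc1; omega)
    · intro hmem
      rw [if_neg, mul_zero]
      rintro ⟨hc1, hc2⟩
      have : (i : ℕ) ∈ Finset.range m.toNat := Finset.mem_range.mpr (by omega)
      exact hmem this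
  · rw [if_neg hd]
    refine Finset.sum_eq_zero fun j hj => ?_
    rw [if_neg, mul_zero]
    rintro ⟨hc1, hc2⟩
    push_cast at hc1
    omega

lemma TT_xx (m : ℤ) (hmr : m ≤ r) (hms : m ≤ s) : TT F r s (xx F r s m) = 0 := by
  ext i k
  have hi := i.isLt
  have hk := k.isLt
  rw [TT_apply]
  simp only [xx_apply, Matrix.zero_apply, Fin.val_mk]
  split_ifs <;> (try push_cast at *) <;> first
    | omega
    | simp
    | (exfalso; omega)
    | (rw [pow_succ]; ring)

lemma S1_xx (m : ℤ) (hmr : m ≤ r) :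
    S1 F r s (xx F r s m) = -(xx F r s (m - 1)) := by
  ext i k
  have hi := i.isLt
  have hk := k.isLt
  rw [S1_apply, Matrix.neg_apply]
  simp only [xx_apply, Fin.val_mk]
  split_ifs <;> (try push_cast at *) <;> first
    | (exfalso; omega)
    | simp
    | (rw [pow_succ]; ring)

lemma S1_pow_xx : ∀ (n : ℕ) (m : ℤ), m ≤ r →
    ((S1 F r s) ^ n) (xx F r s m) = ((-1 : F) ^ n) • xx F r s (m - n) := by
  intro n
  induction n with
  | zero => intro m _; simp
  | succ n ih =>
      intro m hm
      rw [pow_succ, Module.End.mul_apply, S1_xx m hm, map_neg, ih (m - 1) (by omega)]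
      have harg : m - 1 - (n : ℤ) = m - ((n : ℕ) + 1 : ℕ) := by push_cast; ring
      rw [harg, ← neg_smul, pow_succ]
      congr 1
      ring

end Aux3
section Aux4

/-- The alternating convolution identity
`∑_{u=0}^{t} (-1)^u C(L,u) C(L+t-u, L) = 1`. -/
lemma J_id : ∀ (L t : ℕ),
    (∑ u ∈ Finset.range (t + 1),
      ((-1 : ℤ) ^ u * (L.choose u : ℤ) * ((L + t - u).choose L : ℤ))) = 1 := by
  intro L
  induction L with
  | zero =>
      intro t
      rw [Finset.sum_eq_single 0]
      · simp
      · intro u hu hu0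
        have : Nat.choose 0 u = 0 := Nat.choose_eq_zero_of_lt (by omega)
        simp [this]
      · intro h
        exact absurd (Finset.mem_range.mpr (by omega)) h
  | succ L ih =>
      intro t
      -- peel the first term
      rw [Finset.sum_range_succ']
      -- now: ∑_{u ∈ range t} f (u+1) + f 0 = 1
      have hf0 : ((-1 : ℤ) ^ 0 * ((L+1).choose 0 : ℤ) * ((L + 1 + t - 0).choose (L+1) : ℤ))
          = ((L + 1 + t).choose (L+1) : ℤ) := by simp
      rw [hf0]
      have hsplit : ∀ u ∈ Finset.range t,
          ((-1 : ℤ) ^ (u+1) * ((L+1).choose (u+1) : ℤ) * ((L + 1 + t - (u+1)).choose (L+1) : ℤ))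
          = (-1 : ℤ) ^ (u+1) * (L.choose u : ℤ) * ((L + t - u).choose (L+1) : ℤ)
            + (-1 : ℤ) ^ (u+1) * (L.choose (u+1) : ℤ) * ((L + t - u).choose (L+1) : ℤ) := by
        intro u hu
        have hm := Finset.mem_range.mp hu
        have h1 : L + 1 + t - (u+1) = L + t - u := by omega
        rw [h1, Nat.choose_succ_succ]
        push_cast
        ring
      rw [Finset.sum_congr rfl hsplit, Finset.sum_add_distrib]
      -- name the two sums
      set P : ℤ := ∑ u ∈ Finset.range t,
        (-1 : ℤ) ^ (u+1) * (L.choose u : ℤ) * ((L + t - u).choose (L+1) : ℤ) with hP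
      set Q : ℤ := ∑ u ∈ Finset.range t,
        (-1 : ℤ) ^ (u+1) * (L.choose (u+1) : ℤ) * ((L + t - u).choose (L+1) : ℤ) with hQ
      -- S'' = ∑_{u ∈ range (t+1)} (-1)^u C(L,u) C(L+1+t-u, L+1) satisfies S'' = Q + C(L+1+t, L+1)
      set S'' : ℤ := ∑ u ∈ Finset.range (t + 1),
        (-1 : ℤ) ^ u * (L.choose u : ℤ) * ((L + 1 + t - u).choose (L+1) : ℤ) with hS
      have hQS : Q = S'' - ((L + 1 + t).choose (L+1) : ℤ) := by
        rw [hS, Finset.sum_range_succ']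
        have : ∀ u ∈ Finset.range t,
            ((-1 : ℤ) ^ (u+1) * (L.choose (u+1) : ℤ) * ((L + 1 + t - (u+1)).choose (L+1) : ℤ))
            = (-1 : ℤ) ^ (u+1) * (L.choose (u+1) : ℤ) * ((L + t - u).choose (L+1) : ℤ) := by
          intro u hu
          have hm := Finset.mem_range.mp hu
          have h1 : L + 1 + t - (u+1) = L + t - u := by omega
          rw [h1]
        rw [Finset.sum_congr rfl this]
        simp [hQ]
      -- final computation
      have hS2 : S'' + P = 1 := by
        rw [hS, Finset.sum_range_succ]
        have hlast : ((-1 : ℤ) ^ t * (L.choose t : ℤ) * ((L + 1 + t - t).choose (L+1) : ℤ))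
            = (-1 : ℤ) ^ t * (L.choose t : ℤ) := by
          have : L + 1 + t - t = L + 1 := by omega
          rw [this, Nat.choose_self]
          ring
        rw [hlast, hP]
        have hcomb : (∑ u ∈ Finset.range t,
            (-1 : ℤ) ^ u * (L.choose u : ℤ) * ((L + 1 + t - u).choose (L+1) : ℤ))
            + (∑ u ∈ Finset.range t,
            (-1 : ℤ) ^ (u+1) * (L.choose u : ℤ) * ((L + t - u).choose (L+1) : ℤ))
            = ∑ u ∈ Finset.range t,
            (-1 : ℤ) ^ u * (L.choose u : ℤ) * ((L + t - u).choose L : ℤ) := by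
          rw [← Finset.sum_add_distrib]
          refine Finset.sum_congr rfl fun u hu => ?_
          have hm := Finset.mem_range.mp hu
          have h1 : L + 1 + t - u = (L + t - u) + 1 := by omega
          rw [h1, Nat.choose_succ_succ (L + t - u) L]
          push_cast
          ring
        calc (∑ u ∈ Finset.range t,
              (-1 : ℤ) ^ u * (L.choose u : ℤ) * ((L + 1 + t - u).choose (L+1) : ℤ))
              + (-1 : ℤ) ^ t * (L.choose t : ℤ)
              + (∑ u ∈ Finset.range t,
              (-1 : ℤ) ^ (u+1) * (L.choose u : ℤ) * ((L + t - u).choose (L+1) : ℤ))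
            = (∑ u ∈ Finset.range t,
              (-1 : ℤ) ^ u * (L.choose u : ℤ) * ((L + t - u).choose L : ℤ))
              + (-1 : ℤ) ^ t * (L.choose t : ℤ) := by rw [← hcomb]; ring
          _ = ∑ u ∈ Finset.range (t+1),
              (-1 : ℤ) ^ u * (L.choose u : ℤ) * ((L + t - u).choose L : ℤ) := by
              rw [Finset.sum_range_succ]
              have : L + t - t = L := by omega
              rw [this, Nat.choose_self]
              push_cast
              ring
          _ = 1 := ih t
      -- assemble: P + Q + C(L+1+t,L+1) = P + S'' = 1
      rw [hQS]
      linarith [hS2]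

end Aux4
section Aux5

variable {F : Type*} [Field F] {r s : ℕ}

lemma xm_range (L m : ℕ) (hmr : m ≤ r) (hms : m + L ≤ s) :
    ∃ z, ((TT F r s) ^ L) z = xx F r s (m : ℤ) := by
  classical
  refine ⟨∑ u ∈ Finset.range m,
      ((-1 : F) ^ u * ((L + m - (u+1)).choose (m - (u+1)) : F)) •
        vv F r s ((u : ℤ) + 1) ((m : ℤ) + L - u), ?_⟩
  rw [map_sum]
  have hterm : ∀ u ∈ Finset.range m,
      ((TT F r s) ^ L) ((((-1 : F) ^ u * ((L + m - (u+1)).choose (m - (u+1)) : F))) •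
        vv F r s ((u : ℤ) + 1) ((m : ℤ) + L - u))
      = ∑ w ∈ Finset.range (L + 1),
          (((-1 : F) ^ u * ((L + m - (u+1)).choose (m - (u+1)) : F)) * (L.choose w : F)) •
            vv F r s ((u : ℤ) + 1 - w) ((m : ℤ) - u + w) := by
    intro u hu
    have hu' := Finset.mem_range.mp hu
    rw [map_smul,
      TT_pow_vv L ((u:ℤ)+1) ((m:ℤ)+L-u) (by push_cast; omega) (by push_cast; omega),
      Finset.smul_sum]
    refine Finset.sum_congr rfl fun w hw => ?_
    rw [smul_smul]
    congr 2
    push_cast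
    ring
  rw [Finset.sum_congr rfl hterm]
  ext i k
  have hi := i.isLt
  have hk := k.isLt
  rw [xx_apply]
  simp only [Matrix.sum_apply, Matrix.smul_apply, vv_apply, smul_eq_mul]
  by_cases hd : (i : ℤ) + (k : ℤ) + 2 = (m : ℤ) + 1
  · rw [if_pos hd]
    have him : (i : ℕ) + 1 ≤ m := by omega
    have hinner : ∀ u ∈ Finset.range m,
        (∑ w ∈ Finset.range (L+1),
          (((-1 : F) ^ u * ((L + m - (u+1)).choose (m - (u+1)) : F)) * (L.choose w : F)) *
            (if (i:ℤ)+1 = (u:ℤ)+1-(w:ℤ) ∧ (k:ℤ)+1 = (m:ℤ)-(u:ℤ)+(w:ℤ) then 1 else 0))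
        = if (i:ℕ) ≤ u then
            ((-1 : F) ^ u * ((L + m - (u+1)).choose (m - (u+1)) : F)) * (L.choose (u - (i:ℕ)) : F)
          else 0 := by
      intro u hu
      have hu' := Finset.mem_range.mp hu
      by_cases hui : (i:ℕ) ≤ u
      · rw [if_pos hui]
        rw [Finset.sum_eq_single (u - (i:ℕ))]
        · rw [if_pos ⟨by push_cast [Nat.cast_sub hui]; ring, by push_cast [Nat.cast_sub hui]; omega⟩,
            mul_one]
        · intro w hw hwne
          rw [if_neg, mul_zero]
          rintro ⟨hc1, hc2⟩
          exact hwne (by omega)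
        · intro hnot
          have hlt : L < u - (i:ℕ) := by
            by_contra hle
            exact hnot (Finset.mem_range.mpr (by omega))
          rw [Nat.choose_eq_zero_of_lt hlt]
          push_cast
          ring
      · rw [if_neg hui]
        refine Finset.sum_eq_zero fun w hw => ?_
        rw [if_neg, mul_zero]
        rintro ⟨hc1, hc2⟩
        omega
    rw [Finset.sum_congr rfl hinner]
    have hfil : Finset.filter (fun u => (i:ℕ) ≤ u) (Finset.range m) = Finset.Ico (i:ℕ) m := by
      ext u
      simp only [Finset.mem_filter, Finset.mem_range, Finset.mem_Ico]
      omega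
    rw [← Finset.sum_filter, hfil, Finset.sum_Ico_eq_sum_range]
    set t := m - 1 - (i:ℕ) with ht
    have hmt : m - (i:ℕ) = t + 1 := by omega
    rw [hmt]
    have hterm2 : ∀ w ∈ Finset.range (t+1),
        ((-1 : F) ^ ((i:ℕ) + w) * ((L + m - ((i:ℕ)+w+1)).choose (m - ((i:ℕ)+w+1)) : F)) *
          (L.choose ((i:ℕ) + w - (i:ℕ)) : F)
        = (-1:F)^(i:ℕ) * ((-1:F)^w * ((L.choose w : F)) * (((L + t - w).choose L : F))) := by
      intro w hw
      have hw' := Finset.mem_range.mp hw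
      have e1 : (i:ℕ) + w - (i:ℕ) = w := by omega
      have e2 : m - ((i:ℕ)+w+1) = t - w := by omega
      have e3 : L + m - ((i:ℕ)+w+1) = L + t - w := by omega
      have e4 : (L + t - w).choose (t - w) = (L + t - w).choose L := by
        rw [← Nat.choose_symm (by omega : L ≤ L + t - w)]
        congr 1
        omega
      rw [e1, e2, e3, e4, pow_add]
      ring
    rw [Finset.sum_congr rfl hterm2, ← Finset.mul_sum]
    have hJ : (∑ w ∈ Finset.range (t+1),
        ((-1:F)^w * ((L.choose w : F)) * (((L + t - w).choose L : F)))) = 1 := by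
      have h2 := congrArg (fun z : ℤ => (z : F)) (J_id L t)
      push_cast at h2
      exact h2
    rw [hJ, mul_one]
  · rw [if_neg hd]
    refine Finset.sum_eq_zero fun u hu => ?_
    refine Finset.sum_eq_zero fun w hw => ?_
    rw [if_neg, mul_zero]
    rintro ⟨hc1, hc2⟩
    omega

end Aux5
section Aux6

variable {F : Type*} [Field F]

/-- Abstract rank-drop bound: if `n` independent vectors lie in
`ker T ∩ range T^L`, then `rank T^L ≥ rank T^{L+1} + n`. -/
lemma rank_drop {V : Type*} [AddCommGroup V] [Module F V] [FiniteDimensional F V]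
    (T : V →ₗ[F] V) (L n : ℕ) (w : Fin n → V)
    (hmem : ∀ j, w j ∈ LinearMap.range (T ^ L))
    (hker : ∀ j, T (w j) = 0)
    (hli : LinearIndependent F w) :
    Module.finrank F ↥(LinearMap.range (T ^ (L+1))) + n ≤
      Module.finrank F ↥(LinearMap.range (T ^ L)) := by
  classical
  let RL := LinearMap.range (T ^ L)
  let f' : RL →ₗ[F] V := T.domRestrict RL
  have hrange : LinearMap.range f' = LinearMap.range (T ^ (L+1)) := by
    rw [LinearMap.range_domRestrict, pow_succ']
    exact (LinearMap.range_comp _ _).symm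
  let v : Fin n → ↥(LinearMap.ker f') := fun j =>
    ⟨⟨w j, hmem j⟩, by
      rw [LinearMap.mem_ker, LinearMap.domRestrict_apply]
      exact hker j⟩
  have hvli : LinearIndependent F v :=
    LinearIndependent.of_comp ((RL.subtype).comp (LinearMap.ker f').subtype) hli
  have hcard : n ≤ Module.finrank F ↥(LinearMap.ker f') := by
    simpa using hvli.fintype_card_le_finrank
  have hrn := LinearMap.finrank_range_add_finrank_ker f'
  rw [hrange] at hrn
  have hRL : Module.finrank F ↥RL = Module.finrank F ↥(LinearMap.range (T ^ L)) := rfl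
  omega

end Aux6
section Aux7

variable {F : Type*} [Field F] {r s : ℕ}

/-- Each part of the Jordan type satisfies `lam l0 ≥ s + 1 - l0`. -/
lemma claimD (lam : ℕ → ℕ) (hlam : IsJordanType F r s lam)
    (l0 : ℕ) (h1 : 1 ≤ l0) (hlt : l0 < min r s) : s + 1 ≤ l0 + lam l0 := by
  by_contra hcon
  push_neg at hcon
  have hcon' : l0 + lam l0 ≤ s := by omega
  -- the family x_1, ..., x_{l0}
  have hxxli : LinearIndependent F
      (fun j : Fin l0 => xx F r s (((j : ℕ) + 1 : ℕ) : ℤ)) := by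
    rw [Fintype.linearIndependent_iff]
    intro g hg j
    have hjr : (j : ℕ) < r := by omega
    have hs0 : 0 < s := by omega
    have hent := congrArg (fun A : Matrix (Fin r) (Fin s) F => A ⟨(j:ℕ), hjr⟩ ⟨0, hs0⟩) hg
    simp only [Matrix.sum_apply, Matrix.smul_apply, xx_apply, smul_eq_mul,
      Matrix.zero_apply] at hent
    rw [Finset.sum_eq_single j] at hent
    · rw [if_pos (by push_cast; ring)] at hent
      have hne : ((-1 : F)) ^ ((j:ℕ)) ≠ 0 :=
        pow_ne_zero _ (neg_ne_zero.mpr one_ne_zero)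
      exact (mul_eq_zero.mp hent).resolve_right hne
    · intro j' _ hne
      rw [if_neg, mul_zero]
      intro hcond
      apply hne
      apply Fin.ext
      push_cast at hcond
      omega
    · intro habs
      exact absurd (Finset.mem_univ j) habs
  have hbound := rank_drop (TT F r s) (lam l0) l0
    (fun j : Fin l0 => xx F r s (((j : ℕ) + 1 : ℕ) : ℤ))
    (fun j => by
      obtain ⟨z, hz⟩ := xm_range (F := F) (r := r) (s := s) (lam l0) ((j:ℕ)+1)
        (by omega) (by omega)
      exact ⟨z, hz⟩)
    (fun j => TT_xx _ (by push_cast; omega) (by push_cast; omega))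
    hxxli
  have hcount := hlam.2.2 (lam l0 + 1) (by omega)
  rw [Nat.add_sub_cancel] at hcount
  have hsubset : (Finset.Icc 1 (min r s)).filter (fun l => lam l0 + 1 ≤ lam l)
      ⊆ Finset.Icc 1 (l0 - 1) := by
    intro l' hl'
    rw [Finset.mem_filter, Finset.mem_Icc] at hl'
    obtain ⟨⟨hl1, hl2⟩, hl3⟩ := hl'
    rw [Finset.mem_Icc]
    refine ⟨hl1, ?_⟩
    by_contra hge
    push_neg at hge
    have : lam l' ≤ lam l0 := hlam.2.1 l0 l' h1 (by omega) hl2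
    omega
  have hcard2 : ((Finset.Icc 1 (min r s)).filter (fun l => lam l0 + 1 ≤ lam l)).card ≤ l0 - 1 := by
    calc ((Finset.Icc 1 (min r s)).filter (fun l => lam l0 + 1 ≤ lam l)).card
        ≤ (Finset.Icc 1 (l0 - 1)).card := Finset.card_le_card hsubset
      _ = l0 - 1 := by rw [Nat.card_Icc]; omega
  omega

end Aux7

/-- propagating a generator from index `l₀` to index `l` with the same part. -/
theorem stmt2 (p : ℕ) (hp : p.Prime) (F : Type*) [Field F] [CharP F p]
    (r s : ℕ) (hr : 0 < r) (hs : 0 < s)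
    (lam : ℕ → ℕ) (hlam : IsJordanType F r s lam)
    (l0 l : ℕ) (h1 : 1 ≤ l0) (h2 : l0 < l) (h3 : l ≤ min r s)
    (heq : lam l = lam l0)
    (c : ℕ → F)
    (hy : ((TT F r s) ^ (lam l0 - 1))
        (∑ j ∈ Finset.range l0, c (j + 1) •
          vv F r s ((r : ℤ) - l0 + (j + 1)) ((s : ℤ) + 1 - (j + 1)))
      = xx F r s ((r : ℤ) + s + 1 - l0 - lam l0)) :
    ((TT F r s) ^ (lam l0 - 1))
        ((-1 : F) ^ (l - l0) •
          ∑ j ∈ Finset.range l0, c (j + 1) •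
            vv F r s ((r : ℤ) - l + (j + 1)) ((s : ℤ) + 1 - (j + 1)))
      = xx F r s ((r : ℤ) + s + 1 - l - lam l0) := by
  have hl0lt : l0 < min r s := lt_of_lt_of_le h2 h3
  have hD : s + 1 ≤ l0 + lam l0 := claimD lam hlam l0 h1 hl0lt
  have hsum : (∑ j ∈ Finset.range l0, c (j + 1) •
        vv F r s ((r : ℤ) - l + (j + 1)) ((s : ℤ) + 1 - (j + 1)))
      = ((S1 F r s) ^ (l - l0)) (∑ j ∈ Finset.range l0, c (j + 1) •
        vv F r s ((r : ℤ) - l0 + (j + 1)) ((s : ℤ) + 1 - (j + 1))) := by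
    rw [map_sum]
    refine Finset.sum_congr rfl fun j hj => ?_
    have hj' := Finset.mem_range.mp hj
    rw [map_smul, S1_pow_vv (l - l0) _ _ (by push_cast; omega)]
    have harg : (r : ℤ) - l + ((j:ℤ) + 1) = (r : ℤ) - l0 + ((j:ℤ) + 1) - ((l - l0 : ℕ) : ℤ) := by
      rw [Nat.cast_sub h2.le]
      ring
    rw [harg]
  rw [hsum, map_smul]
  have hcpow : ((TT F r s) ^ (lam l0 - 1)) * ((S1 F r s) ^ (l - l0))
      = ((S1 F r s) ^ (l - l0)) * ((TT F r s) ^ (lam l0 - 1)) :=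
    ((commS1TT (F := F) (r := r) (s := s)).symm.pow_pow _ _).eq
  rw [← Module.End.mul_apply, hcpow, Module.End.mul_apply, hy,
    S1_pow_xx (l - l0) _ (by push_cast; omega), smul_smul, ← mul_pow]
  norm_num
  congr 1
  rw [Nat.cast_sub h2.le]
  ring
end
end

section
/- Let a and b be nonnegative integers and k a positive integer. If b <= a and a + k - 1 < p, then the k x k matrix over F whose (i,j) entry is C(a, b+j-i) is invertible. -/
open scoped BigOperators

noncomputable section

open Polynomial in
lemma iter_deriv_struct {F : Type*} [Field F] (a : ℕ) (h : F[X]) :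
    ∀ b ≤ a, ∃ g : F[X], derivative^[b] ((1 + X) ^ a * h) = (1 + X) ^ (a - b) * g ∧
      g.natDegree ≤ h.natDegree := by
  intro b
  induction b with
  | zero => intro _; exact ⟨h, by simp, le_rfl⟩
  | succ b ih =>
      intro hba
      obtain ⟨g, hg, hdeg⟩ := ih (by omega)
      refine ⟨C (((a - b : ℕ)) : F) * g + (1 + X) * derivative g, ?_, ?_⟩
      · rw [Function.iterate_succ_apply', hg, derivative_mul, derivative_pow]
        have h1 : derivative (1 + X : F[X]) = 1 := by simp
        rw [h1, mul_one]
        have h2 : a - b = (a - (b + 1)) + 1 := by omega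
        rw [h2, Nat.add_sub_cancel]
        push_cast
        ring
      · refine (natDegree_add_le _ _).trans (max_le ?_ ?_)
        · exact (natDegree_C_mul_le _ _).trans hdeg
        · rcases eq_or_ne (derivative g) 0 with h0 | h0
          · simp [h0]
          · have hg1 : g.natDegree ≠ 0 := by
              intro hz
              rw [Polynomial.eq_C_of_natDegree_eq_zero hz] at h0
              simp at h0
            calc ((1+X) * derivative g).natDegree
                ≤ (1+X : F[X]).natDegree + (derivative g).natDegree := natDegree_mul_le
              _ ≤ 1 + (g.natDegree - 1) := by
                  gcongr
                  · rw [add_comm]; exact (natDegree_X_add_C 1).le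
                  · exact natDegree_derivative_le g
              _ ≤ g.natDegree := by omega
              _ ≤ h.natDegree := hdeg


open Polynomial in
lemma binF_natCast (F : Type*) [Field F] (a m : ℕ) :
    binF F (a : ℤ) (m : ℤ) = (a.choose m : F) := by
  unfold binF
  split_ifs with hc
  · simp
  · have : a < m := by omega
    rw [Nat.choose_eq_zero_of_lt this]
    simp


open Polynomial

/-- if `b ≤ a` and `a + k - 1 < p` then the `k × k` matrix with
entries `C(a, b+j-i)` over `F` is invertible. -/
theorem stmt6 (p : ℕ) (hp : p.Prime) (F : Type*) [Field F] [CharP F p]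
    (a b k : ℕ) (hk : 0 < k) (hba : b ≤ a) (hak : a + k - 1 < p) :
    IsUnit (Matrix.of fun i j : Fin k =>
      binF F (a : ℤ) ((b : ℤ) + (j : ℤ) - (i : ℤ))) := by
  classical
  rw [Matrix.isUnit_iff_isUnit_det, isUnit_iff_ne_zero]
  intro hdet
  obtain ⟨v, hv, hmv⟩ := Matrix.exists_mulVec_eq_zero_iff.mpr hdet
  set h : F[X] := ∑ j : Fin k, C (v j) * X ^ (k - 1 - (j : ℕ)) with hh
  have hhne : h ≠ 0 := by
    obtain ⟨j, hj⟩ := Function.ne_iff.mp hv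
    intro h0
    apply hj
    have hco := congrArg (fun q => Polynomial.coeff q (k - 1 - (j : ℕ))) h0
    simp only [hh, finset_sum_coeff, coeff_C_mul, coeff_X_pow, coeff_zero] at hco
    rw [Finset.sum_eq_single j] at hco
    · simpa using hco
    · intro j' _ hj'
      have hne : ¬ (k - 1 - (j : ℕ) = k - 1 - (j' : ℕ)) := by
        have := j.isLt; have := j'.isLt
        intro he; apply hj'; ext; omega
      simp [hne]
    · simp
  have hhdeg : h.natDegree ≤ k - 1 := by
    apply natDegree_sum_le_of_forall_le
    intro j _
    exact (natDegree_C_mul_X_pow_le _ _).trans (by omega)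
  have h1X : (1 + X : F[X]) ≠ 0 := by
    rw [add_comm, ← Polynomial.C_1]
    exact X_add_C_ne_zero 1
  set f : F[X] := (1 + X) ^ a * h with hf
  have hfne : f ≠ 0 := mul_ne_zero (pow_ne_zero _ h1X) hhne
  have h1Xdeg : (1 + X : F[X]).natDegree = 1 := by
    rw [add_comm, ← Polynomial.C_1]; exact natDegree_X_add_C 1
  have hfdeg : f.natDegree = a + h.natDegree := by
    rw [hf, natDegree_mul (pow_ne_zero _ h1X) hhne, natDegree_pow, h1Xdeg, mul_one]
  -- key coefficient vanishing
  have hcoeff : ∀ n, b ≤ n → n ≤ b + k - 1 → f.coeff n = 0 := by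
    intro n hbn hnk
    have hi : b + (k - 1) - n < k := by omega
    have hrow := congrFun hmv (⟨b + (k - 1) - n, hi⟩ : Fin k)
    simp only [Matrix.mulVec, dotProduct, Matrix.of_apply, Pi.zero_apply] at hrow
    have hfn : f.coeff n =
        ∑ j : Fin k, binF F (a : ℤ)
          ((b : ℤ) + (j : ℤ) - ((b + (k - 1) - n : ℕ) : ℤ)) * v j := by
      rw [hf, hh, Finset.mul_sum, finset_sum_coeff]
      apply Finset.sum_congr rfl
      intro j _
      have hrw : (1 + X) ^ a * (C (v j) * X ^ (k - 1 - (j : ℕ)))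
          = C (v j) * ((1 + X) ^ a * X ^ (k - 1 - (j : ℕ))) := by ring
      rw [hrw, coeff_C_mul, coeff_mul_X_pow']
      have hjk := j.isLt
      have hival : (((⟨b + (k - 1) - n, hi⟩ : Fin k) : ℕ) : ℤ) = ((b + (k - 1) - n : ℕ) : ℤ) := rfl
      by_cases he : k - 1 - (j : ℕ) ≤ n
      · rw [if_pos he, coeff_one_add_X_pow]
        have hval : (b : ℤ) + (j : ℤ) - ((b + (k - 1) - n : ℕ) : ℤ)
            = ((n - (k - 1 - (j : ℕ)) : ℕ) : ℤ) := by omega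
        rw [hval, binF_natCast, mul_comm]
      · rw [if_neg he]
        have hneg : (b : ℤ) + (j : ℤ) - ((b + (k - 1) - n : ℕ) : ℤ) < 0 := by omega
        unfold binF
        rw [if_neg (by omega), zero_mul, mul_zero]
    rw [hfn]
    exact hrow
  -- iterated derivative
  obtain ⟨g, hgD, hgdeg⟩ := iter_deriv_struct a h b hba
  rw [← hf] at hgD
  set D : F[X] := derivative^[b] f with hD
  have hble : b ≤ f.natDegree := by omega
  have hDne : D ≠ 0 := by
    intro h0
    have hc : D.coeff (f.natDegree - b) =
        (f.natDegree - b + b).descFactorial b • f.coeff (f.natDegree - b + b) :=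
      coeff_iterate_derivative f (f.natDegree - b)
    rw [Nat.sub_add_cancel hble, h0, coeff_zero] at hc
    have hlc : f.coeff f.natDegree ≠ 0 := by
      rw [coeff_natDegree]; exact leadingCoeff_ne_zero.mpr hfne
    have hndvd : ¬ p ∣ (f.natDegree).descFactorial b := by
      rw [Nat.descFactorial_eq_prod_range]
      intro hdvd
      obtain ⟨i, hi, hpi⟩ := (Prime.dvd_finset_prod_iff hp.prime _).mp hdvd
      have hib : i < b := Finset.mem_range.mp hi
      have h1 : 0 < f.natDegree - i := by omega
      have h2 := Nat.le_of_dvd h1 hpi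
      omega
    have hcast : (((f.natDegree).descFactorial b : ℕ) : F) ≠ 0 := by
      rw [Ne, CharP.cast_eq_zero_iff F p]; exact hndvd
    rw [nsmul_eq_mul] at hc
    exact (mul_ne_zero hcast hlc) hc.symm
  have hXk : (X : F[X]) ^ k ∣ D := by
    rw [Polynomial.X_pow_dvd_iff]
    intro d hd
    rw [hD, coeff_iterate_derivative, hcoeff (d + b) (by omega) (by omega), smul_zero]
  have hgne : g ≠ 0 := by
    intro h0
    rw [h0, mul_zero] at hgD
    exact hDne hgD
  have hcop : IsCoprime ((X : F[X]) ^ k) ((1 + X : F[X]) ^ (a - b)) :=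
    IsCoprime.pow (⟨-1, 1, by ring⟩ : IsCoprime (X : F[X]) (1 + X))
  have hXg : (X : F[X]) ^ k ∣ g := by
    apply hcop.dvd_of_dvd_mul_left
    rw [← hgD]
    exact hXk
  have hkg : k ≤ g.natDegree := by
    have := natDegree_le_of_dvd hXg hgne
    rwa [natDegree_X_pow] at this
  omega
end
end

section
/- Suppose r + s > p^{n+1} and let l be an integer with 1 <= l <= r+s-p^{n+1}. Then in M(r,s) the element y_l = (-1)^{r-l} v_{r+1-l, s} satisfies T^{p^{n+1}-1}(y_l) = x_{r+s+1-l-p^{n+1}}. -/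
open scoped BigOperators

noncomputable section

section Aux

variable {F : Type*} [Field F] {r s : ℕ}

def extM (F : Type*) [Field F] (r s : ℕ) (A : Matrix (Fin r) (Fin s) F) (i j : ℕ) : F :=
  if h : i < r ∧ j < s then A ⟨i, h.1⟩ ⟨j, h.2⟩ else 0

lemma extM_smul (c : F) (A : Matrix (Fin r) (Fin s) F) (i j : ℕ) :
    extM F r s (c • A) i j = c * extM F r s A i j := by
  unfold extM; split <;> simp

lemma extM_sum {ι : Type*} (t : Finset ι) (f : ι → Matrix (Fin r) (Fin s) F) (i j : ℕ) :
    extM F r s (∑ x ∈ t, f x) i j = ∑ x ∈ t, extM F r s (f x) i j := by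
  unfold extM
  split
  · simp [Matrix.sum_apply]
  · simp

lemma eq_of_extM (A B : Matrix (Fin r) (Fin s) F)
    (h : ∀ u v : ℕ, extM F r s A u v = extM F r s B u v) : A = B := by
  ext i j
  have := h i j
  simpa [extM, i.isLt, j.isLt] using this

lemma extM_TT (A : Matrix (Fin r) (Fin s) F) (i j : ℕ) :
    extM F r s (TT F r s A) i j = extM F r s A (i+1) j + extM F r s A i (j+1) := by
  unfold extM TT
  by_cases h : i < r ∧ j < s
  · rw [dif_pos h]
    simp only [LinearMap.coe_mk, AddHom.coe_mk, Matrix.of_apply]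
    congr 1
    · split_ifs with h1 h2 h2 <;> first | rfl | omega
    · split_ifs with h1 h2 h2 <;> first | rfl | omega
  · rw [dif_neg h, dif_neg (by omega), dif_neg (by omega)]
    ring

lemma extM_pow (k : ℕ) (A : Matrix (Fin r) (Fin s) F) (i j : ℕ) :
    extM F r s (((TT F r s) ^ k) A) i j
      = ∑ t ∈ Finset.range (k+1), (k.choose t : F) * extM F r s A (i+t) (j+(k-t)) := by
  induction k generalizing i j with
  | zero => simp
  | succ k ih =>
    have h1 : ((TT F r s) ^ (k+1)) A = TT F r s (((TT F r s) ^ k) A) := by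
      rw [pow_succ']; rfl
    rw [h1, extM_TT, ih, ih]
    set g : ℕ → F := fun t => extM F r s A (i+t) (j+(k+1-t)) with hg
    have e1 : ∀ t ∈ Finset.range (k+1),
        (k.choose t : F) * extM F r s A (i+1+t) (j+(k-t))
          = (k.choose t : F) * g (t+1) := by
      intro t ht
      rw [Finset.mem_range] at ht
      rw [hg]; congr 2 <;> omega
    have e2 : ∀ t ∈ Finset.range (k+1),
        (k.choose t : F) * extM F r s A (i+t) (j+1+(k-t))
          = (k.choose t : F) * g t := by
      intro t ht
      rw [Finset.mem_range] at ht
      rw [hg]; congr 2 <;> omega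
    rw [Finset.sum_congr rfl e1, Finset.sum_congr rfl e2]
    have e3 : ∀ t ∈ Finset.range (k+2),
        ((k+1).choose t : F) * extM F r s A (i+t) (j+(k+1-t))
          = ((k+1).choose t : F) * g t := fun t _ => rfl
    rw [Finset.sum_congr rfl e3]
    rw [Finset.sum_range_succ' (fun t => ((k+1).choose t : F) * g t) (k+1)]
    have e4 : ∀ t ∈ Finset.range (k+1),
        ((k+1).choose (t+1) : F) * g (t+1)
          = (k.choose t : F) * g (t+1) + (k.choose (t+1) : F) * g (t+1) := by
      intro t _
      rw [Nat.choose_succ_succ]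
      push_cast
      ring
    rw [Finset.sum_congr rfl e4, Finset.sum_add_distrib]
    have e5 : (∑ t ∈ Finset.range (k+1), (k.choose (t+1) : F) * g (t+1))
        + ((k+1).choose 0 : F) * g 0
        = ∑ t ∈ Finset.range (k+1), (k.choose t : F) * g t := by
      have hA := Finset.sum_range_succ' (fun t => (k.choose t : F) * g t) (k+1)
      have hB := Finset.sum_range_succ (fun t => (k.choose t : F) * g t) (k+1)
      simp only [Nat.choose_succ_self, Nat.cast_zero, zero_mul, add_zero] at hA hB
      rw [Nat.choose_zero_right, Nat.cast_one, one_mul] at hA ⊢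
      rw [← hA, hB]
    rw [add_assoc, e5]

lemma choose_pow_sub_one (p : ℕ) (hp : p.Prime) (F : Type*) [Field F] [CharP F p]
    (N : ℕ) (t : ℕ) (ht : t < p ^ N) : (((p ^ N - 1).choose t : ℕ) : F) = (-1) ^ t := by
  induction t with
  | zero => simp
  | succ t ih =>
    have h1 : t < p ^ N := by omega
    have hpascal : (p ^ N).choose (t+1)
        = (p ^ N - 1).choose t + (p ^ N - 1).choose (t+1) := by
      conv_lhs => rw [show p ^ N = (p ^ N - 1) + 1 by omega]
      exact Nat.choose_succ_succ _ _
    have hdvd : p ∣ (p ^ N).choose (t+1) :=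
      Nat.Prime.dvd_choose_pow hp (by omega) (by omega)
    have hzero : (((p ^ N).choose (t+1) : ℕ) : F) = 0 :=
      (CharP.cast_eq_zero_iff F p _).mpr hdvd
    rw [hpascal] at hzero
    push_cast at hzero
    rw [ih h1] at hzero
    rw [pow_succ]
    linear_combination hzero

lemma extM_vv (a b : ℕ) (har : a ≤ r) (hbs : b ≤ s) (u v : ℕ) :
    extM F r s (vv F r s (a : ℤ) (b : ℤ)) u v = if u + 1 = a ∧ v + 1 = b then 1 else 0 := by
  unfold extM vv
  by_cases h : u < r ∧ v < s
  · rw [dif_pos h]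
    simp only [Matrix.of_apply]
    by_cases hc : u + 1 = a ∧ v + 1 = b
    · rw [if_pos (by omega), if_pos hc]
    · rw [if_neg (by omega), if_neg hc]
  · rw [dif_neg h, if_neg (by omega)]

end Aux

lemma neg_one_aux (F : Type*) [Field F] (x u : ℕ) :
    ((-1 : F) ^ (x + u)) * (-1) ^ x = (-1) ^ u := by
  have h : ((-1 : F) ^ x) * ((-1) ^ x) = 1 := by
    rw [← pow_add, ← two_mul, pow_mul]; norm_num
  rw [pow_add]
  linear_combination ((-1 : F) ^ u) * h


/-- for `1 ≤ l ≤ r+s-p^{n+1}`, `y_l = (-1)^{r-l} v_{r+1-l,s}` satisfies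
`T^{p^{n+1}-1}(y_l) = x_{r+s+1-l-p^{n+1}}`. -/
theorem stmt7 (p : ℕ) (hp : p.Prime) (F : Type*) [Field F] [CharP F p]
    (r s n : ℕ) (hr : 0 < r) (hs : 0 < s)
    (hn1 : p ^ n ≤ max r s) (hn2 : max r s < p ^ (n + 1))
    (hrs : p ^ (n + 1) < r + s)
    (l : ℕ) (hl1 : 1 ≤ l) (hl2 : l ≤ r + s - p ^ (n + 1)) :
    ((TT F r s) ^ (p ^ (n + 1) - 1))
        ((-1 : F) ^ (r - l) • vv F r s ((r : ℤ) + 1 - l) (s : ℤ))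
      = xx F r s ((r : ℤ) + s + 1 - l - p ^ (n + 1)) := by
  obtain ⟨P, hP⟩ : ∃ P, p ^ (n + 1) = P := ⟨_, rfl⟩
  have hrP : r < P := by rw [← hP]; exact lt_of_le_of_lt (le_max_left r s) hn2
  have hsP : s < P := by rw [← hP]; exact lt_of_le_of_lt (le_max_right r s) hn2
  rw [hP] at hrs hl2
  have hC : ∀ t, t < P → (((P - 1).choose t : ℕ) : F) = (-1) ^ t := by
    intro t ht
    have := choose_pow_sub_one p hp F (n + 1) t (by rw [hP]; exact ht)
    rwa [hP] at this
  have hcast : ((p : ℤ)) ^ (n + 1) = ((P : ℕ) : ℤ) := by rw [← hP]; push_cast; ring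
  set a := r + 1 - l with ha
  set m := r + s + 1 - l - P with hm
  have h1 : (r : ℤ) + 1 - l = ((a : ℕ) : ℤ) := by omega
  rw [hcast, hP]
  have h2 : (r : ℤ) + s + 1 - l - (P : ℤ) = ((m : ℕ) : ℤ) := by omega
  rw [h1, h2]
  apply eq_of_extM
  intro u v
  rw [map_smul, extM_smul, extM_pow]
  have hL : (∑ t ∈ Finset.range (P - 1 + 1),
        ((P - 1).choose t : F) * extM F r s (vv F r s (a : ℤ) (s : ℤ)) (u + t) (v + (P - 1 - t)))
      = ∑ t ∈ Finset.range (P - 1 + 1),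
        ((-1 : F) ^ t) * (if u + t + 1 = a ∧ v + (P - 1 - t) + 1 = s then 1 else 0) := by
    apply Finset.sum_congr rfl
    intro t ht
    rw [Finset.mem_range] at ht
    rw [hC t (by omega), extM_vv a s (by omega) le_rfl]
  rw [hL]
  have hRHS : extM F r s (xx F r s ((m : ℕ) : ℤ)) u v
      = ∑ jj ∈ Finset.range m,
        ((-1 : F) ^ jj) * (if u + 1 = jj + 1 ∧ v + 1 = m - jj then 1 else 0) := by
    rw [xx, Int.toNat_natCast, extM_sum]
    apply Finset.sum_congr rfl
    intro jj hjj
    rw [Finset.mem_range] at hjj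
    rw [extM_smul]
    congr 1
    have e1 : ((jj : ℤ) + 1) = (((jj + 1 : ℕ)) : ℤ) := by push_cast; ring
    have e2 : (((m : ℕ) : ℤ) - jj) = (((m - jj : ℕ)) : ℤ) := by omega
    rw [e1, e2, extM_vv (jj + 1) (m - jj) (by omega) (by omega)]
  rw [hRHS]
  by_cases hcase : u + v + 1 = m
  · have hR : (∑ jj ∈ Finset.range m,
        ((-1 : F) ^ jj) * (if u + 1 = jj + 1 ∧ v + 1 = m - jj then 1 else 0)) = (-1 : F) ^ u := by
      rw [Finset.sum_eq_single u]
      · rw [if_pos (by omega), mul_one]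
      · intro jj _ hne
        rw [if_neg (by omega), mul_zero]
      · intro h
        exfalso
        rw [Finset.mem_range] at h
        omega
    have hLv : (∑ t ∈ Finset.range (P - 1 + 1),
        ((-1 : F) ^ t) * (if u + t + 1 = a ∧ v + (P - 1 - t) + 1 = s then 1 else 0))
        = (-1 : F) ^ (a - 1 - u) := by
      rw [Finset.sum_eq_single (a - 1 - u)]
      · rw [if_pos (by omega), mul_one]
      · intro t ht hne
        rw [Finset.mem_range] at ht
        rw [if_neg (by omega), mul_zero]
      · intro h
        exfalso
        rw [Finset.mem_range] at h
        omega
    rw [hR, hLv]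
    have e3 : r - l = (a - 1 - u) + u := by omega
    rw [e3]
    exact neg_one_aux F (a - 1 - u) u
  · have hR : (∑ jj ∈ Finset.range m,
        ((-1 : F) ^ jj) * (if u + 1 = jj + 1 ∧ v + 1 = m - jj then 1 else 0)) = 0 := by
      apply Finset.sum_eq_zero
      intro jj hjj
      rw [Finset.mem_range] at hjj
      rw [if_neg (by omega), mul_zero]
    have hLv : (∑ t ∈ Finset.range (P - 1 + 1),
        ((-1 : F) ^ t) * (if u + t + 1 = a ∧ v + (P - 1 - t) + 1 = s then 1 else 0)) = 0 := by
      apply Finset.sum_eq_zero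
      intro t ht
      rw [Finset.mem_range] at ht
      rw [if_neg (by omega), mul_zero]
    rw [hR, hLv, mul_zero]
end
end

section
/- Let q = p^n for some positive integer n, let R, S be integers with 0 < R, S < q, and set m = min(R,S), e = R+S-q. Write (mu_1 >= ... >= mu_m) = lambda(R,S) and (nu_1 >= ... >= nu_{min(q-R,S)}) = lambda(q-R,S). Then for every k with max(e,0)+1 <= k <= m one has nu_{S+1-k} = q - mu_k. -/
open scoped BigOperators

noncomputable section

open Module LinearMap

namespace Stmt10Aux

variable (F : Type*) [Field F]

lemma TT_apply (r s : ℕ) (A : Matrix (Fin r) (Fin s) F) (i : Fin r) (j : Fin s) :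
    TT F r s A i j =
      (if h : (i : ℕ) + 1 < r then A ⟨(i : ℕ) + 1, h⟩ j else 0) +
      (if h : (j : ℕ) + 1 < s then A i ⟨(j : ℕ) + 1, h⟩ else 0) := rfl

/-- row shift -/
def Xm (r s : ℕ) : Matrix (Fin r) (Fin s) F →ₗ[F] Matrix (Fin r) (Fin s) F where
  toFun A := Matrix.of fun i j => if h : (i : ℕ) + 1 < r then A ⟨(i : ℕ) + 1, h⟩ j else 0
  map_add' A B := by
    ext i j
    simp only [Matrix.of_apply, Matrix.add_apply]
    split_ifs <;> simp
  map_smul' c A := by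
    ext i j
    simp only [Matrix.of_apply, Matrix.smul_apply, RingHom.id_apply, smul_eq_mul]
    split_ifs <;> simp

/-- column shift -/
def Ym (r s : ℕ) : Matrix (Fin r) (Fin s) F →ₗ[F] Matrix (Fin r) (Fin s) F where
  toFun A := Matrix.of fun i j => if h : (j : ℕ) + 1 < s then A i ⟨(j : ℕ) + 1, h⟩ else 0
  map_add' A B := by
    ext i j
    simp only [Matrix.of_apply, Matrix.add_apply]
    split_ifs <;> simp
  map_smul' c A := by
    ext i j
    simp only [Matrix.of_apply, Matrix.smul_apply, RingHom.id_apply, smul_eq_mul]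
    split_ifs <;> simp

lemma Xm_apply (r s : ℕ) (A : Matrix (Fin r) (Fin s) F) (i : Fin r) (j : Fin s) :
    Xm F r s A i j = if h : (i : ℕ) + 1 < r then A ⟨(i : ℕ) + 1, h⟩ j else 0 := rfl

lemma Ym_apply (r s : ℕ) (A : Matrix (Fin r) (Fin s) F) (i : Fin r) (j : Fin s) :
    Ym F r s A i j = if h : (j : ℕ) + 1 < s then A i ⟨(j : ℕ) + 1, h⟩ else 0 := rfl

lemma TT_eq (r s : ℕ) : TT F r s = Xm F r s + Ym F r s := by
  ext A i j
  rfl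

lemma Xm_pow_apply (r s : ℕ) (a : ℕ) (A : Matrix (Fin r) (Fin s) F) (i : Fin r) (j : Fin s) :
    ((Xm F r s) ^ a) A i j = if h : (i : ℕ) + a < r then A ⟨(i : ℕ) + a, h⟩ j else 0 := by
  induction a generalizing A with
  | zero =>
    rw [pow_zero]
    have h : (i : ℕ) + 0 < r := by simpa using i.isLt
    rw [dif_pos h]
    simp [Module.End.one_apply]
  | succ a ih =>
    rw [pow_succ, Module.End.mul_apply, ih]
    rcases Nat.lt_or_ge ((i : ℕ) + a) r with h1 | h1
    · rw [dif_pos h1, Xm_apply]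
      simp only [Fin.val_mk]
      rcases Nat.lt_or_ge ((i : ℕ) + a + 1) r with h2 | h2
      · rw [dif_pos h2, dif_pos (show (i : ℕ) + (a+1) < r from h2)]
        rfl
      · rw [dif_neg (by omega), dif_neg (by omega)]
    · rw [dif_neg (by omega), dif_neg (by omega)]

lemma Ym_pow_apply (r s : ℕ) (a : ℕ) (A : Matrix (Fin r) (Fin s) F) (i : Fin r) (j : Fin s) :
    ((Ym F r s) ^ a) A i j = if h : (j : ℕ) + a < s then A i ⟨(j : ℕ) + a, h⟩ else 0 := by
  induction a generalizing A with
  | zero =>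
    rw [pow_zero]
    have h : (j : ℕ) + 0 < s := by simpa using j.isLt
    rw [dif_pos h]
    simp [Module.End.one_apply]
  | succ a ih =>
    rw [pow_succ, Module.End.mul_apply, ih]
    rcases Nat.lt_or_ge ((j : ℕ) + a) s with h1 | h1
    · rw [dif_pos h1, Ym_apply]
      simp only [Fin.val_mk]
      rcases Nat.lt_or_ge ((j : ℕ) + a + 1) s with h2 | h2
      · rw [dif_pos h2, dif_pos (show (j : ℕ) + (a+1) < s from h2)]
        rfl
      · rw [dif_neg (by omega), dif_neg (by omega)]
    · rw [dif_neg (by omega), dif_neg (by omega)]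

lemma Xm_pow_eq_zero (r s a : ℕ) (h : r ≤ a) : (Xm F r s) ^ a = 0 := by
  ext A i j
  rw [Xm_pow_apply, dif_neg (by omega)]
  rfl

lemma Ym_pow_eq_zero (r s a : ℕ) (h : s ≤ a) : (Ym F r s) ^ a = 0 := by
  ext A i j
  rw [Ym_pow_apply, dif_neg (by omega)]
  rfl

lemma commute_Xm_Ym (r s : ℕ) : Commute (Xm F r s) (Ym F r s) := by
  show _ * _ = _ * _
  ext A i j
  show (Xm F r s) ((Ym F r s) A) i j = (Ym F r s) ((Xm F r s) A) i j
  rw [Xm_apply, Ym_apply]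
  split_ifs with h1 h2
  · rw [Ym_apply, Xm_apply, dif_pos h2, dif_pos h1]
  · rw [Ym_apply, dif_neg h2]
  · rw [Xm_apply, dif_neg h1]
  · rfl

lemma TT_pow_eq_zero (p : ℕ) (hp : p.Prime) [CharP F p] (n r s q : ℕ) (hq : q = p ^ n)
    (hr : r ≤ q) (hs : s ≤ q) : (TT F r s) ^ q = 0 := by
  rw [TT_eq, (commute_Xm_Ym F r s).add_pow]
  apply Finset.sum_eq_zero
  intro i hi
  simp only [Finset.mem_range] at hi
  rcases eq_or_ne i 0 with h0 | h0
  · subst h0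
    rw [Nat.sub_zero, Ym_pow_eq_zero F r s q hs]
    simp
  rcases eq_or_ne i q with hiq | hiq
  · subst hiq
    rw [Xm_pow_eq_zero F r s i hr]
    simp
  · have hdvd : p ∣ q.choose i := by
      subst hq
      exact Nat.Prime.dvd_choose_pow hp h0 hiq
    have h1 : ((q.choose i : ℕ) : F) = 0 := (CharP.cast_eq_zero_iff F p _).mpr hdvd
    have h2 : ((q.choose i : ℕ) : Module.End F (Matrix (Fin r) (Fin s) F)) = 0 := by
      rw [← map_natCast (algebraMap F (Module.End F (Matrix (Fin r) (Fin s) F))), h1, map_zero]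
    rw [h2, mul_zero]

end Stmt10Aux


namespace Stmt10Aux

open Module LinearMap Submodule

variable (F : Type*) [Field F]

/-- An element of the kernel of `TT` vanishing on row 0 is zero. -/
lemma ker_row_zero (r s : ℕ) (hr : 0 < r) (A : Matrix (Fin r) (Fin s) F)
    (hA : TT F r s A = 0) (h0 : ∀ j : Fin s, A ⟨0, hr⟩ j = 0) : A = 0 := by
  have key : ∀ m (hm : m < r), ∀ j, A ⟨m, hm⟩ j = 0 := by
    intro m
    induction m with
    | zero => intro hm j; exact h0 j
    | succ i ih =>
      intro hm j
      have hi : i < r := by omega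
      have hent : TT F r s A ⟨i, hi⟩ j = 0 := by rw [hA]; rfl
      rw [TT_apply] at hent
      rw [dif_pos (show i + 1 < r from hm)] at hent
      have h2 : (if h : (j : ℕ) + 1 < s then A ⟨i, hi⟩ ⟨(j : ℕ) + 1, h⟩ else 0) = 0 := by
        split_ifs with h
        · exact ih hi ⟨(j : ℕ) + 1, h⟩
        · rfl
      rw [h2, add_zero] at hent
      exact hent
  ext i j
  have := key i.val i.isLt j
  simpa using this

lemma finrank_ker_TT_le (r s : ℕ) (hr : 0 < r) :
    finrank F (LinearMap.ker (TT F r s)) ≤ s := by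
  let ρ : Matrix (Fin r) (Fin s) F →ₗ[F] (Fin s → F) :=
    { toFun := fun A => fun j => A ⟨0, hr⟩ j
      map_add' := fun A B => rfl
      map_smul' := fun c A => rfl }
  have hinj : Function.Injective (ρ.comp (LinearMap.ker (TT F r s)).subtype) := by
    rw [← LinearMap.ker_eq_bot]
    rw [LinearMap.ker_eq_bot']
    intro x hx
    have hx' : ∀ j : Fin s, (x : Matrix (Fin r) (Fin s) F) ⟨0, hr⟩ j = 0 := by
      intro j
      exact congrFun hx j
    have := ker_row_zero F r s hr x x.2 hx'
    exact Subtype.ext this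
  calc finrank F (LinearMap.ker (TT F r s)) ≤ finrank F (Fin s → F) :=
        LinearMap.finrank_le_finrank_of_injective hinj
    _ = s := by simp

/-- rank-nullity for the image of a submodule. -/
lemma finrank_map_add_inf_ker {M N : Type*} [AddCommGroup M] [Module F M]
    [AddCommGroup N] [Module F N] [FiniteDimensional F M]
    (π : M →ₗ[F] N) (W : Submodule F M) :
    finrank F (W.map π) + finrank F ↥(W ⊓ LinearMap.ker π) = finrank F W := by
  have h1 := LinearMap.finrank_range_add_finrank_ker (π.comp W.subtype)
  have h2 : LinearMap.range (π.comp W.subtype) = W.map π := by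
    rw [LinearMap.range_comp, Submodule.range_subtype]
  have h3 : finrank F ↥(LinearMap.ker (π.comp W.subtype))
      = finrank F ↥(W ⊓ LinearMap.ker π) := by
    rw [LinearMap.ker_comp]
    rw [← Submodule.finrank_map_subtype_eq W (Submodule.comap W.subtype (LinearMap.ker π))]
    rw [Submodule.map_comap_subtype]
  rw [h2, h3] at h1
  exact h1

lemma finrank_ker_comp_le {M : Type*} [AddCommGroup M] [Module F M] [FiniteDimensional F M]
    (f g : M →ₗ[F] M) :
    finrank F (LinearMap.ker (f ∘ₗ g)) ≤
      finrank F (LinearMap.ker f) + finrank F (LinearMap.ker g) := by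
  have h := finrank_map_add_inf_ker F g (LinearMap.ker (f ∘ₗ g))
  have h1 : (LinearMap.ker (f ∘ₗ g)).map g ≤ LinearMap.ker f := by
    rintro x ⟨y, hy, rfl⟩
    exact hy
  have h2 : finrank F ((LinearMap.ker (f ∘ₗ g)).map g) ≤ finrank F (LinearMap.ker f) :=
    Submodule.finrank_mono h1
  have h3 : finrank F ↥(LinearMap.ker (f ∘ₗ g) ⊓ LinearMap.ker g)
      ≤ finrank F (LinearMap.ker g) := Submodule.finrank_mono inf_le_right
  omega

lemma finrank_matrix' (r s : ℕ) : finrank F (Matrix (Fin r) (Fin s) F) = r * s := by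
  rw [Module.finrank_matrix]
  simp

lemma finrank_ker_TT_pow_le (r s : ℕ) (hr : 0 < r) (a : ℕ) :
    finrank F (LinearMap.ker ((TT F r s) ^ a)) ≤ a * s := by
  induction a with
  | zero =>
    rw [pow_zero]
    have : LinearMap.ker (1 : Module.End F (Matrix (Fin r) (Fin s) F)) = ⊥ :=
      LinearMap.ker_id
    rw [this]
    simp
  | succ a ih =>
    rw [pow_succ]
    have := finrank_ker_comp_le F ((TT F r s) ^ a) (TT F r s)
    have hk := finrank_ker_TT_le F r s hr
    have : finrank F (LinearMap.ker (((TT F r s) ^ a) ∘ₗ (TT F r s))) ≤ a * s + s := by omega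
    rw [Module.End.mul_eq_comp]
    calc finrank F (LinearMap.ker (((TT F r s) ^ a) ∘ₗ (TT F r s))) ≤ a * s + s := this
      _ = (a + 1) * s := by ring

lemma rank_TT_pow (q s : ℕ) (hq : 0 < q) (hT : (TT F q s) ^ q = 0) (m : ℕ) (hm : m ≤ q) :
    finrank F (LinearMap.range ((TT F q s) ^ m)) = (q - m) * s := by
  have hdim := finrank_matrix' F q s
  have htot : finrank F (LinearMap.ker ((TT F q s) ^ q)) = q * s := by
    rw [hT]
    have : LinearMap.ker (0 : Module.End F (Matrix (Fin q) (Fin s) F)) = ⊤ := LinearMap.ker_zero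
    rw [this, finrank_top, hdim]
  have hsplit : (TT F q s) ^ q = ((TT F q s) ^ (q - m)) ∘ₗ ((TT F q s) ^ m) := by
    rw [← Module.End.mul_eq_comp, ← pow_add]
    congr 1
    omega
  have hle := finrank_ker_comp_le F ((TT F q s) ^ (q - m)) ((TT F q s) ^ m)
  rw [← hsplit, htot] at hle
  have h1 := finrank_ker_TT_pow_le F q s hq (q - m)
  have h2 := finrank_ker_TT_pow_le F q s hq m
  have hrn := LinearMap.finrank_range_add_finrank_ker ((TT F q s) ^ m)
  rw [hdim] at hrn
  have hker : finrank F (LinearMap.ker ((TT F q s) ^ m)) = m * s := by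
    have : q * s ≤ (q - m) * s + finrank F (LinearMap.ker ((TT F q s) ^ m)) := by omega
    have hqm : (q - m) * s + m * s = q * s := by
      rw [← Nat.add_mul]
      congr 1
      omega
    omega
  have hqm : (q - m) * s + m * s = q * s := by
    rw [← Nat.add_mul]; congr 1; omega
  omega

end Stmt10Aux


namespace Stmt10Aux

open Module LinearMap Submodule

variable (F : Type*) [Field F]

def iota (q R S : ℕ) (hR : R ≤ q) :
    Matrix (Fin R) (Fin S) F →ₗ[F] Matrix (Fin q) (Fin S) F where
  toFun A := Matrix.of fun i j => if h : (i : ℕ) < R then A ⟨(i : ℕ), h⟩ j else 0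
  map_add' A B := by
    ext i j
    simp only [Matrix.of_apply, Matrix.add_apply]
    split_ifs <;> simp
  map_smul' c A := by
    ext i j
    simp only [Matrix.of_apply, Matrix.smul_apply, RingHom.id_apply, smul_eq_mul]
    split_ifs <;> simp

def piR (q R S : ℕ) (hR : R ≤ q) :
    Matrix (Fin q) (Fin S) F →ₗ[F] Matrix (Fin (q - R)) (Fin S) F where
  toFun B := Matrix.of fun i j => B ⟨R + (i : ℕ), by omega⟩ j
  map_add' A B := rfl
  map_smul' c A := rfl

lemma iota_apply (q R S : ℕ) (hR : R ≤ q) (A : Matrix (Fin R) (Fin S) F)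
    (i : Fin q) (j : Fin S) :
    iota F q R S hR A i j = if h : (i : ℕ) < R then A ⟨(i : ℕ), h⟩ j else 0 := rfl

lemma piR_apply (q R S : ℕ) (hR : R ≤ q) (B : Matrix (Fin q) (Fin S) F)
    (i : Fin (q - R)) (j : Fin S) :
    piR F q R S hR B i j = B ⟨R + (i : ℕ), by omega⟩ j := rfl

lemma iota_injective (q R S : ℕ) (hR : R ≤ q) : Function.Injective (iota F q R S hR) := by
  rw [← LinearMap.ker_eq_bot, LinearMap.ker_eq_bot']
  intro A hA
  ext i j
  have hi : (i : ℕ) < q := by omega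
  have := congrFun (congrFun hA ⟨(i : ℕ), hi⟩) j
  rw [iota_apply, dif_pos (by simpa using i.isLt : ((⟨(i : ℕ), hi⟩ : Fin q) : ℕ) < R)] at this
  simpa using this

lemma iota_comm (q R S : ℕ) (hR : R ≤ q) :
    (TT F q S) ∘ₗ (iota F q R S hR) = (iota F q R S hR) ∘ₗ (TT F R S) := by
  ext A i j
  have hiq := i.isLt
  have hjS := j.isLt
  show (TT F q S) (iota F q R S hR A) i j = iota F q R S hR (TT F R S A) i j
  simp only [TT_apply, iota_apply, Fin.val_mk]
  split_ifs <;> first | rfl | (exfalso; omega) | simp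

lemma piR_comm (q R S : ℕ) (hR : R ≤ q) :
    (TT F (q - R) S) ∘ₗ (piR F q R S hR) = (piR F q R S hR) ∘ₗ (TT F q S) := by
  ext B i j
  have hi := i.isLt
  have hj := j.isLt
  show (TT F (q - R) S) (piR F q R S hR B) i j = piR F q R S hR (TT F q S B) i j
  simp only [TT_apply, piR_apply, Fin.val_mk]
  split_ifs <;> first | rfl | (exfalso; omega) | simp

lemma piR_surjective (q R S : ℕ) (hR : R ≤ q) : Function.Surjective (piR F q R S hR) := by
  intro C
  refine ⟨Matrix.of fun i j => if h : R ≤ (i : ℕ) then C ⟨(i : ℕ) - R, by omega⟩ j else 0, ?_⟩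
  ext i j
  have hi := i.isLt
  rw [piR_apply]
  simp only [Matrix.of_apply, Fin.val_mk]
  rw [dif_pos (by omega)]
  congr 1
  ext
  simp

lemma ker_piR (q R S : ℕ) (hR : R ≤ q) :
    LinearMap.ker (piR F q R S hR) = LinearMap.range (iota F q R S hR) := by
  apply le_antisymm
  · intro B hB
    rw [LinearMap.mem_ker] at hB
    refine ⟨Matrix.of fun i j => B ⟨(i : ℕ), by omega⟩ j, ?_⟩
    ext i j
    have hi := i.isLt
    rw [iota_apply]
    split_ifs with h
    · simp only [Matrix.of_apply, Fin.val_mk]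
    · have hi' : (i : ℕ) - R < q - R := by omega
      have := congrFun (congrFun hB ⟨(i : ℕ) - R, hi'⟩) j
      rw [piR_apply] at this
      simp only [Fin.val_mk] at this
      have heq : (⟨R + ((i : ℕ) - R), by omega⟩ : Fin q) = i := by
        ext; simp; omega
      rw [heq] at this
      rw [this]
      rfl
  · rintro B ⟨A, rfl⟩
    rw [LinearMap.mem_ker]
    ext i j
    rw [piR_apply, iota_apply, dif_neg (by simp)]
    rfl

end Stmt10Aux


namespace Stmt10Aux

open Module LinearMap Submodule

variable (F : Type*) [Field F]

lemma comp_pow_comm {M N : Type*} [AddCommGroup M] [Module F M] [AddCommGroup N] [Module F N]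
    (f : M →ₗ[F] N) (A : Module.End F M) (B : Module.End F N)
    (h : f ∘ₗ A = B ∘ₗ f) (m : ℕ) : f ∘ₗ (A ^ m) = (B ^ m) ∘ₗ f := by
  induction m with
  | zero => ext x; rfl
  | succ m ih =>
    rw [pow_succ, pow_succ, Module.End.mul_eq_comp, Module.End.mul_eq_comp,
      ← LinearMap.comp_assoc, ih, LinearMap.comp_assoc, h, ← LinearMap.comp_assoc]

lemma TT_RS_pow_q_eq_zero (q R S : ℕ) (hR : R ≤ q) (hT : (TT F q S) ^ q = 0) :
    (TT F R S) ^ q = 0 := by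
  have hcomm : (iota F q R S hR) ∘ₗ ((TT F R S) ^ q)
      = ((TT F q S) ^ q) ∘ₗ (iota F q R S hR) :=
    comp_pow_comm F (iota F q R S hR) (TT F R S) (TT F q S) (iota_comm F q R S hR).symm q
  apply LinearMap.ext
  intro A
  apply iota_injective F q R S hR
  have h1 := LinearMap.congr_fun hcomm A
  simp only [LinearMap.comp_apply] at h1
  rw [h1, hT]
  simp

/-- The main rank identity. -/
lemma rank_identity (q R S : ℕ) (h0q : 0 < q) (hR : R ≤ q) (hS : S ≤ q)
    (hT : (TT F q S) ^ q = 0) (m : ℕ) (hm : m ≤ q) :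
    finrank F (LinearMap.range ((TT F (q - R) S) ^ m)) + R * S
      = (q - m) * S + finrank F (LinearMap.range ((TT F R S) ^ (q - m))) := by
  have hπcomm : (piR F q R S hR) ∘ₗ ((TT F q S) ^ m)
      = ((TT F (q-R) S) ^ m) ∘ₗ (piR F q R S hR) :=
    comp_pow_comm F _ _ _ (piR_comm F q R S hR).symm m
  set W := LinearMap.range ((TT F q S) ^ m) with hW
  have hrange : LinearMap.range ((TT F (q-R) S) ^ m) = W.map (piR F q R S hR) := by
    have h1 : LinearMap.range (((TT F (q-R) S) ^ m) ∘ₗ (piR F q R S hR))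
        = LinearMap.range ((TT F (q-R) S) ^ m) := by
      rw [LinearMap.range_comp, LinearMap.range_eq_top.mpr (piR_surjective F q R S hR),
        Submodule.map_top]
    rw [← h1, ← hπcomm, LinearMap.range_comp]
  have hmap := finrank_map_add_inf_ker F (piR F q R S hR) W
  have hWrank : finrank F W = (q - m) * S := rank_TT_pow F q S h0q hT m hm
  have hWker : W = LinearMap.ker ((TT F q S) ^ (q - m)) := by
    apply Submodule.eq_of_le_of_finrank_eq
    · rintro x hx
      obtain ⟨y, rfl⟩ := hx
      rw [LinearMap.mem_ker, ← Module.End.mul_apply, ← pow_add]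
      have hqm : q - m + m = q := by omega
      rw [hqm, hT]
      rfl
    · rw [hWrank]
      have h1 := LinearMap.finrank_range_add_finrank_ker ((TT F q S) ^ (q - m))
      rw [finrank_matrix' F q S, rank_TT_pow F q S h0q hT (q-m) (by omega)] at h1
      have h2 : q - (q - m) = m := by omega
      rw [h2] at h1
      have h3 : (q - m) * S + m * S = q * S := by rw [← Nat.add_mul]; congr 1; omega
      omega
  have hιcomm : (iota F q R S hR) ∘ₗ ((TT F R S) ^ (q-m))
      = ((TT F q S) ^ (q-m)) ∘ₗ (iota F q R S hR) :=
    comp_pow_comm F _ _ _ (iota_comm F q R S hR).symm (q-m)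
  have hinf : W ⊓ LinearMap.ker (piR F q R S hR)
      = (LinearMap.ker ((TT F R S) ^ (q - m))).map (iota F q R S hR) := by
    rw [ker_piR, hWker]
    apply le_antisymm
    · intro x hx
      obtain ⟨hx1, hx2⟩ := Submodule.mem_inf.mp hx
      obtain ⟨u, rfl⟩ := hx2
      refine Submodule.mem_map.mpr ⟨u, ?_, rfl⟩
      rw [LinearMap.mem_ker] at hx1 ⊢
      apply iota_injective F q R S hR
      have h4 := LinearMap.congr_fun hιcomm u
      simp only [LinearMap.comp_apply] at h4
      rw [h4, hx1, map_zero]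
    · intro x hx
      obtain ⟨u, hu, rfl⟩ := Submodule.mem_map.mp hx
      rw [LinearMap.mem_ker] at hu
      apply Submodule.mem_inf.mpr
      constructor
      · rw [LinearMap.mem_ker]
        have h4 := LinearMap.congr_fun hιcomm u
        simp only [LinearMap.comp_apply] at h4
        rw [← h4, hu, map_zero]
      · exact ⟨u, rfl⟩
  have hιrank : finrank F ((LinearMap.ker ((TT F R S) ^ (q - m))).map (iota F q R S hR))
      = finrank F (LinearMap.ker ((TT F R S) ^ (q - m))) :=
    (LinearEquiv.finrank_eq (Submodule.equivMapOfInjective _ (iota_injective F q R S hR)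
      (LinearMap.ker ((TT F R S) ^ (q - m))))).symm
  have hrn := LinearMap.finrank_range_add_finrank_ker ((TT F R S) ^ (q - m))
  rw [finrank_matrix' F R S] at hrn
  rw [hrange]
  rw [hinf, hιrank] at hmap
  omega

end Stmt10Aux

namespace Stmt10Aux

open Module LinearMap Submodule

lemma count_ge {lam : ℕ → ℕ} {L : ℕ}
    (mono : ∀ l l', 1 ≤ l → l ≤ l' → l' ≤ L → lam l' ≤ lam l)
    {i : ℕ} (hi1 : 1 ≤ i) (hiL : i ≤ L) (j : ℕ) :
    j ≤ lam i ↔ i ≤ ((Finset.Icc 1 L).filter fun l => j ≤ lam l).card := by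
  constructor
  · intro h
    have hsub : Finset.Icc 1 i ⊆ (Finset.Icc 1 L).filter fun l => j ≤ lam l := by
      intro l hl
      rw [Finset.mem_Icc] at hl
      rw [Finset.mem_filter, Finset.mem_Icc]
      exact ⟨⟨hl.1, le_trans hl.2 hiL⟩, le_trans h (mono l i hl.1 hl.2 hiL)⟩
    have hcard := Finset.card_le_card hsub
    rw [Nat.card_Icc] at hcard
    omega
  · intro h
    by_contra hcon
    push_neg at hcon
    have hsub : ((Finset.Icc 1 L).filter fun l => j ≤ lam l) ⊆ Finset.Icc 1 (i-1) := by
      intro l hl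
      rw [Finset.mem_filter, Finset.mem_Icc] at hl
      rw [Finset.mem_Icc]
      refine ⟨hl.1.1, ?_⟩
      by_contra hli
      push_neg at hli
      have hml : lam l ≤ lam i := mono i l hi1 (by omega) hl.1.2
      omega
    have hcard := Finset.card_le_card hsub
    rw [Nat.card_Icc] at hcard
    omega

end Stmt10Aux

/-- `nu_{S+1-k} = q - mu_k` for `max(e,0)+1 ≤ k ≤ m`. -/
theorem stmt10 (p : ℕ) (hp : p.Prime) (F : Type*) [Field F] [CharP F p]
    (n q R S : ℕ) (hn : 0 < n) (hq : q = p ^ n)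
    (hR0 : 0 < R) (hRq : R < q) (hS0 : 0 < S) (hSq : S < q)
    (mu nu : ℕ → ℕ)
    (hmu : IsJordanType F R S mu) (hnu : IsJordanType F (q - R) S nu)
    (k : ℕ) (hk1 : R + S - q + 1 ≤ k) (hk2 : k ≤ min R S) :
    (nu (S + 1 - k) : ℤ) = (q : ℤ) - mu k := by

  obtain ⟨hmu1, hmu2, hmu3⟩ := hmu
  obtain ⟨hnu1, hnu2, hnu3⟩ := hnu
  have h0q : 0 < q := lt_trans hR0 hRq
  have hTq : (TT F q S) ^ q = 0 :=
    Stmt10Aux.TT_pow_eq_zero F p hp n q S q hq le_rfl (le_of_lt hSq)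
  have hid : ∀ m : ℕ, m ≤ q →
      Module.finrank F ↥(LinearMap.range ((TT F (q - R) S) ^ m)) + R * S
        = (q - m) * S + Module.finrank F ↥(LinearMap.range ((TT F R S) ^ (q - m))) :=
    fun m hm => Stmt10Aux.rank_identity F q R S h0q (le_of_lt hRq) (le_of_lt hSq) hTq m hm
  have hmono : ∀ (r : ℕ) (j : ℕ), 1 ≤ j →
      Module.finrank F ↥(LinearMap.range ((TT F r S) ^ j))
        ≤ Module.finrank F ↥(LinearMap.range ((TT F r S) ^ (j - 1))) := by
    intro r j hj
    apply Submodule.finrank_mono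
    have h1 : (TT F r S) ^ j = ((TT F r S) ^ (j - 1)) ∘ₗ (TT F r S) := by
      rw [← Module.End.mul_eq_comp, ← pow_succ]
      congr 1
      omega
    rw [h1]
    exact LinearMap.range_comp_le_range _ _
  -- the key relation between the two counting functions
  have hrel : ∀ j, 1 ≤ j → j ≤ q →
      (((Finset.Icc 1 (min (q - R) S)).filter fun l => j ≤ nu l).card : ℤ)
        + (((Finset.Icc 1 (min R S)).filter fun l => (q - j + 1) ≤ mu l).card : ℤ)
        = S := by
    intro j hj1 hjq
    have hd := hnu3 j hj1
    have hc := hmu3 (q - j + 1) (by omega)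
    have e1 := hid (j - 1) (by omega)
    have e2 := hid j hjq
    rw [show q - (j - 1) = q - j + 1 from by omega] at e1
    rw [show (q - j + 1) * S = (q - j) * S + S from by ring] at e1
    rw [show q - j + 1 - 1 = q - j from by omega] at hc
    have m1 := hmono (q - R) j hj1
    have m2 := hmono R (q - j + 1) (by omega)
    rw [show q - j + 1 - 1 = q - j from by omega] at m2
    omega
  have hk1' : 1 ≤ k := by omega
  -- value of the top count for mu
  have hd1 : ((Finset.Icc 1 (min (q - R) S)).filter fun l => 1 ≤ nu l).card
      = min (q - R) S := by
    rw [Finset.filter_true_of_mem, Nat.card_Icc]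
    · omega
    · intro l hl
      rw [Finset.mem_Icc] at hl
      exact hnu1 l hl.1 hl.2
  have hcq := hrel 1 le_rfl (by omega)
  rw [show q - 1 + 1 = q from by omega, hd1] at hcq
  -- mu k < q
  have hmuk_lt : mu k < q := by
    by_contra hcon
    push_neg at hcon
    have := (Stmt10Aux.count_ge hmu2 hk1' hk2 q).mp hcon
    omega
  have ha1 : 1 ≤ mu k := hmu1 k hk1' hk2
  -- index bounds for nu
  have hi01 : 1 ≤ S + 1 - k := by omega
  have hi0L : S + 1 - k ≤ min (q - R) S := by omega
  -- lower bound
  have h_ge : q - mu k ≤ nu (S + 1 - k) := by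
    apply (Stmt10Aux.count_ge hnu2 hi01 hi0L (q - mu k)).mpr
    have hr1 := hrel (q - mu k) (by omega) (by omega)
    rw [show q - (q - mu k) + 1 = mu k + 1 from by omega] at hr1
    have hclt : ¬ k ≤ ((Finset.Icc 1 (min R S)).filter fun l => (mu k + 1) ≤ mu l).card := by
      intro hcon
      have := (Stmt10Aux.count_ge hmu2 hk1' hk2 (mu k + 1)).mpr hcon
      omega
    omega
  -- upper bound
  have h_le : nu (S + 1 - k) ≤ q - mu k := by
    by_contra hcon
    push_neg at hcon
    have h1 : q - mu k + 1 ≤ nu (S + 1 - k) := by omega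
    have h2 := (Stmt10Aux.count_ge hnu2 hi01 hi0L (q - mu k + 1)).mp h1
    have hr1 := hrel (q - mu k + 1) (by omega) (by omega)
    rw [show q - (q - mu k + 1) + 1 = mu k from by omega] at hr1
    have h3 := (Stmt10Aux.count_ge hmu2 hk1' hk2 (mu k)).mp le_rfl
    omega
  omega
end
end

section
/- For every integer t >= 0, every integer i with 0 <= i <= t, and every integer z: (a) if i q + 1 <= z <= i q + k' then f_t(z) = (-1)^i A_i(z); (b) if i q + k' + 1 <= z <= i q + R then f_t(z) = (-1)^i (A_i(z) + (-1)^R D_i(z)); (c) if i q + R + 1 <= z <= i q + q - S + k' then f_t(z) = (-1)^i (-1)^R D_i(z); and (d) if i < t and i q + q - S + k' + 1 <= z <= (i+1) q then f_t(z) = (-1)^i ((-1)^R D_i(z) - A_{i+1}(z)). -/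
open scoped BigOperators

noncomputable section

/-- the four regimes of `f_t`. -/
theorem stmt12 (p : ℕ) (hp : p.Prime) (F : Type*) [Field F] [CharP F p]
    (q R S k k' mu : ℕ) (hq : 0 < q)
    (hR0 : 0 < R) (hS0 : 0 < S) (hk0 : 0 < k) (hk'0 : 0 < k') (hmu0 : 0 < mu)
    (hsum : mu + k + k' = R + S + 1) (hRq : R < q) (hSq : S < q)
    (hmk : mu + k ≤ q)
    (a d : ℕ → F)
    (A D : ℕ → ℤ → F)
    (hA : ∀ (i : ℕ) (z : ℤ), A i z = ∑ j ∈ Finset.range k,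
      a (j + 1) * binF F ((mu : ℤ) - 1) ((i : ℤ) * q + R - k + (j + 1) - z))
    (hD : ∀ (i : ℕ) (z : ℤ), D i z = ∑ j ∈ Finset.range (((k : ℤ) + q - R - S).toNat),
      d (j + 1) * binF F ((mu : ℤ) - 1) ((i : ℤ) * q + R + S + (j + 1) - k - z))
    (f : ℕ → ℤ → F)
    (hf : ∀ (t : ℕ) (z : ℤ), f t z =
      (∑ i ∈ Finset.range (t + 1), (-1 : F) ^ i * A i z) +
      (-1 : F) ^ R * ∑ i ∈ Finset.range (t + 1), (-1 : F) ^ i * D i z) :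
    ∀ (t i : ℕ), i ≤ t → ∀ z : ℤ,
      (((i : ℤ) * q + 1 ≤ z → z ≤ (i : ℤ) * q + k' →
          f t z = (-1 : F) ^ i * A i z) ∧
       ((i : ℤ) * q + k' + 1 ≤ z → z ≤ (i : ℤ) * q + R →
          f t z = (-1 : F) ^ i * (A i z + (-1 : F) ^ R * D i z)) ∧
       ((i : ℤ) * q + R + 1 ≤ z → z ≤ (i : ℤ) * q + q - S + k' →
          f t z = (-1 : F) ^ i * ((-1 : F) ^ R * D i z)) ∧
       (i < t → (i : ℤ) * q + q - S + k' + 1 ≤ z → z ≤ ((i : ℤ) + 1) * q →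
          f t z = (-1 : F) ^ i * ((-1 : F) ^ R * D i z - A (i + 1) z))) := by
  have hq' : (0:ℤ) < q := by exact_mod_cast hq
  have hRq' : (R:ℤ) < q := by exact_mod_cast hRq
  have hSq' : (S:ℤ) < q := by exact_mod_cast hSq
  have hsum' : (mu:ℤ) + k + k' = R + S + 1 := by exact_mod_cast hsum
  have hmk' : (mu:ℤ) + k ≤ q := by exact_mod_cast hmk
  have key : ∀ m n : ℕ, m ≤ n → (m:ℤ)*q ≤ (n:ℤ)*q := by
    intro m n h
    have : (m:ℤ) ≤ n := by exact_mod_cast h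
    exact mul_le_mul_of_nonneg_right this (le_of_lt hq')
  have haz : ∀ (m : ℕ) (w : ℤ),
      (w ≤ (m:ℤ)*q - S + k' ∨ (m:ℤ)*q + R < w) → A m w = 0 := by
    intro m w hw
    rw [hA]
    apply Finset.sum_eq_zero
    intro j hj
    have hjk : j < k := Finset.mem_range.mp hj
    have hb : binF F ((mu : ℤ) - 1) ((m:ℤ)*q + R - k + (j+1) - w) = 0 := by
      simp only [binF]
      split_ifs with hc
      · exfalso
        set X := (m:ℤ)*q with hX
        clear hX
        omega
      · rfl
    rw [hb, mul_zero]
  have hdz : ∀ (m : ℕ) (w : ℤ),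
      (w ≤ (m:ℤ)*q + k' ∨ (m:ℤ)*q + q < w) → D m w = 0 := by
    intro m w hw
    rw [hD]
    apply Finset.sum_eq_zero
    intro j hj
    have hjk : j < ((k : ℤ) + q - R - S).toNat := Finset.mem_range.mp hj
    have hb : binF F ((mu : ℤ) - 1) ((m:ℤ)*q + R + S + (j+1) - k - w) = 0 := by
      simp only [binF]
      split_ifs with hc
      · exfalso
        set X := (m:ℤ)*q with hX
        clear hX
        omega
      · rfl
    rw [hb, mul_zero]
  intro t i hit z
  refine ⟨?_, ?_, ?_, ?_⟩
  · -- case (a)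
    intro h1 h2
    rw [hf]
    have hA1 : (∑ i' ∈ Finset.range (t+1), (-1:F)^i' * A i' z) = (-1:F)^i * A i z := by
      apply Finset.sum_eq_single_of_mem i (Finset.mem_range.mpr (by omega))
      intro j _ hne
      have hz : A j z = 0 := by
        apply haz
        rcases lt_or_gt_of_ne hne with hlt | hgt
        · right
          have := key (j+1) i hlt
          push_cast at this
          linarith
        · left
          have := key (i+1) j hgt
          push_cast at this
          linarith
      rw [hz, mul_zero]
    have hD1 : (∑ i' ∈ Finset.range (t+1), (-1:F)^i' * D i' z) = 0 := by
      apply Finset.sum_eq_zero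
      intro j _
      have hz : D j z = 0 := by
        apply hdz
        rcases lt_or_ge j i with hlt | hge
        · right
          have := key (j+1) i hlt
          push_cast at this
          linarith
        · left
          have := key i j hge
          linarith
      rw [hz, mul_zero]
    rw [hA1, hD1, mul_zero, add_zero]
  · -- case (b)
    intro h1 h2
    rw [hf]
    have hA1 : (∑ i' ∈ Finset.range (t+1), (-1:F)^i' * A i' z) = (-1:F)^i * A i z := by
      apply Finset.sum_eq_single_of_mem i (Finset.mem_range.mpr (by omega))
      intro j _ hne
      have hz : A j z = 0 := by
        apply haz
        rcases lt_or_gt_of_ne hne with hlt | hgt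
        · right
          have := key (j+1) i hlt
          push_cast at this
          linarith
        · left
          have := key (i+1) j hgt
          push_cast at this
          linarith
      rw [hz, mul_zero]
    have hD1 : (∑ i' ∈ Finset.range (t+1), (-1:F)^i' * D i' z) = (-1:F)^i * D i z := by
      apply Finset.sum_eq_single_of_mem i (Finset.mem_range.mpr (by omega))
      intro j _ hne
      have hz : D j z = 0 := by
        apply hdz
        rcases lt_or_gt_of_ne hne with hlt | hgt
        · right
          have := key (j+1) i hlt
          push_cast at this
          linarith
        · left
          have := key (i+1) j hgt
          push_cast at this
          linarith
      rw [hz, mul_zero]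
    rw [hA1, hD1]
    ring
  · -- case (c)
    intro h1 h2
    rw [hf]
    have hA1 : (∑ i' ∈ Finset.range (t+1), (-1:F)^i' * A i' z) = 0 := by
      apply Finset.sum_eq_zero
      intro j _
      have hz : A j z = 0 := by
        apply haz
        rcases lt_or_ge i j with hlt | hge
        · left
          have := key (i+1) j hlt
          push_cast at this
          linarith
        · right
          have := key j i hge
          linarith
      rw [hz, mul_zero]
    have hD1 : (∑ i' ∈ Finset.range (t+1), (-1:F)^i' * D i' z) = (-1:F)^i * D i z := by
      apply Finset.sum_eq_single_of_mem i (Finset.mem_range.mpr (by omega))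
      intro j _ hne
      have hz : D j z = 0 := by
        apply hdz
        rcases lt_or_gt_of_ne hne with hlt | hgt
        · right
          have := key (j+1) i hlt
          push_cast at this
          linarith
        · left
          have := key (i+1) j hgt
          push_cast at this
          linarith
      rw [hz, mul_zero]
    rw [hA1, hD1]
    ring
  · -- case (d)
    intro hit' h1 h2
    have h2' : z ≤ (i:ℤ)*q + q := by
      have hexp : ((i:ℤ)+1)*q = (i:ℤ)*q + q := by ring
      linarith [h2, hexp.ge, hexp.le]
    rw [hf]
    have hA1 : (∑ i' ∈ Finset.range (t+1), (-1:F)^i' * A i' z)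
        = (-1:F)^(i+1) * A (i+1) z := by
      apply Finset.sum_eq_single_of_mem (i+1) (Finset.mem_range.mpr (by omega))
      intro j _ hne
      have hz : A j z = 0 := by
        apply haz
        rcases lt_or_gt_of_ne hne with hlt | hgt
        · right
          have hji : j ≤ i := by omega
          have := key j i hji
          linarith
        · left
          have hji : i + 2 ≤ j := by omega
          have := key (i+2) j hji
          push_cast at this
          linarith
      rw [hz, mul_zero]
    have hD1 : (∑ i' ∈ Finset.range (t+1), (-1:F)^i' * D i' z) = (-1:F)^i * D i z := by
      apply Finset.sum_eq_single_of_mem i (Finset.mem_range.mpr (by omega))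
      intro j _ hne
      have hz : D j z = 0 := by
        apply hdz
        rcases lt_or_gt_of_ne hne with hlt | hgt
        · right
          have := key (j+1) i hlt
          push_cast at this
          linarith
        · left
          have := key (i+1) j hgt
          push_cast at this
          linarith
      rw [hz, mul_zero]
    rw [hA1, hD1, pow_succ]
    ring
end
end
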